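/- arXiv:2004.12680 — 3 statements merged into one kernel-verified Lean document; each statement's English description precedes it below -/
import Mathlib

section
/- For every m ∈ ℕ, every δ ∈ (0,1), and every probability distribution μ on ℕ, with probability at least 1 − δ over an i.i.d. sample X = (X_1,...,X_m) ~ μ^m, the empirical measure μ̂_m satisfies ‖μ̂_m − μ‖_TV ≤ Φ_m(μ̂_m) + 3·√(log(2/δ)/(2m)). -/
/-!
Let `Z(x) = ‖μ̂_m - μ‖_TV - Φ_m(μ̂_m)`. Changing one sample point moves `μ̂_m` by `1/m` at two
atoms, so the total variation and `Φ_m` each move by at most `1/m`, and `Z` has bounded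
differences `2/m`. McDiarmid's inequality, proved for the product law `μ^m` by induction on `m`
with Hoeffding's lemma in one coordinate, then gives `P(Z ≥ E Z + ε) ≤ exp(-m ε² / 2) ≤ δ / 2`.

It remains to show `E Z ≤ 0`, one atom `j` at a time: `K = m μ̂_m(j)` is binomial with mean
`s = m μ(j)`, and `E|K - s| ≤ 2 E √K`. For `s ≤ 1` compare with the event `K = 0` and use
Bernoulli's inequality; for `s ≥ 1` bound `|K - s|` and `√K` by quadratic polynomials in `K`,
whose expectations are explicit.
-/

open scoped BigOperators

/-- The empirical measure induced by a sample `x` of size `m`: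
`μ̂_m(i) = (1/m) ∑_t 1{x_t = i}`. -/
noncomputable def empMeas (m : ℕ) (x : Fin m → ℕ) (i : ℕ) : ℝ :=
  ((Finset.univ.filter (fun t => x t = i)).card : ℝ) / m

/-- Total variation distance `(1/2) ∑_i |μ(i) - ν(i)|`. -/
noncomputable def tvDist (μ ν : ℕ → ℝ) : ℝ := (1 / 2) * ∑' i, |μ i - ν i|

/-- `Φ_m(ν) = (1/√m) ∑_j √(ν j)`. -/
noncomputable def Phi (m : ℕ) (ν : ℕ → ℝ) : ℝ :=
  (1 / Real.sqrt m) * ∑' j, Real.sqrt (ν j)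

/-- `μ` is a probability distribution on ℕ. -/
def IsProb (μ : ℕ → ℝ) : Prop := (∀ i, 0 ≤ μ i) ∧ ∑' i, μ i = 1

/-- Probability of the event `A` under the i.i.d. product `μ^m`. -/
noncomputable def probOf (μ : ℕ → ℝ) (m : ℕ) (A : Set (Fin m → ℕ)) : ℝ :=
  ∑' x : Fin m → ℕ, Set.indicator A (fun y => ∏ t, μ (y t)) x

/-- Expectation of `f` under the i.i.d. product `μ^m`. -/
noncomputable def expect (μ : ℕ → ℝ) (m : ℕ) (f : (Fin m → ℕ) → ℝ) : ℝ :=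
  ∑' x : Fin m → ℕ, (∏ t, μ (x t)) * f x

/-- Empirical Rademacher complexity of the class of all boolean functions on ℕ,
conditional on the sample `x`:
`R̂_m(x) = E_σ [ sup_{f : ℕ → {0,1}} (1/m) ∑_t σ_t f(x_t) ]`,
with `σ` uniform on `{-1,1}^m`. -/
noncomputable def empRad (m : ℕ) (x : Fin m → ℕ) : ℝ :=
  (1 / 2 ^ m) * ∑ σ : Fin m → Bool,
    sSup (Set.range (fun f : ℕ → Bool =>
      (1 / (m : ℝ)) * ∑ t, (if σ t then (1 : ℝ) else -1) * (if f (x t) then (1 : ℝ) else 0)))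

/-- `Λ_m(μ) = ∑_{j : μ(j) < 1/m} μ(j) + (1/(2√m)) ∑_{j : μ(j) ≥ 1/m} √(μ(j))`. -/
noncomputable def Lam (m : ℕ) (μ : ℕ → ℝ) : ℝ :=
  (∑' j, Set.indicator {j | μ j < 1 / (m : ℝ)} μ j)
    + (1 / (2 * Real.sqrt m)) *
      ∑' j, Set.indicator {j | 1 / (m : ℝ) ≤ μ j} (fun j => Real.sqrt (μ j)) j

/-- The half-norm `‖ν‖_{1/2} = (∑_i √(ν i))²`. -/
noncomputable def hfnrm (ν : ℕ → ℝ) : ℝ := (∑' i, Real.sqrt (ν i)) ^ 2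

/-- `T_μ(η)` with respect to a non-increasing rearrangement `π` of `μ`:
the least `t` such that the tail mass beyond the `t` largest atoms is `< η`
(ranks are 0-indexed). -/
noncomputable def truncT (μ : ℕ → ℝ) (π : ℕ ≃ ℕ) (η : ℝ) : ℕ :=
  sInf {t : ℕ | ∑' i, μ (π (i + t)) < η}

/-- The truncation `μ[η]`: keep only the `T_μ(η)` largest atoms of `μ`
(as ranked by the non-increasing rearrangement `π`). -/
noncomputable def trunc (μ : ℕ → ℝ) (π : ℕ ≃ ℕ) (η : ℝ) (i : ℕ) : ℝ :=
  Set.indicator {i | π.symm i < truncT μ π η} μ i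

open Real MeasureTheory ProbabilityTheory

section

variable {μ : ℕ → ℝ}

lemma IsProb.summable (hμ : IsProb μ) : Summable μ := by
  by_contra h
  simpa [tsum_eq_zero_of_not_summable h] using hμ.2

lemma summable_mul_of_abs_le {ι : Type*} {w f : ι → ℝ} {C : ℝ} (hw : Summable w)
    (hw0 : ∀ i, 0 ≤ w i) (hf : ∀ i, |f i| ≤ C) : Summable fun i => w i * f i :=
  (hw.mul_right C).of_norm_bounded fun i => by
    rw [Real.norm_eq_abs, abs_mul, abs_of_nonneg (hw0 i)]
    exact mul_le_mul_of_nonneg_left (hf i) (hw0 i)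

lemma IsProb.summable_mul (hμ : IsProb μ) {f : ℕ → ℝ} {C : ℝ} (hf : ∀ v, |f v| ≤ C) :
    Summable fun v => μ v * f v :=
  summable_mul_of_abs_le hμ.summable hμ.1 hf

lemma IsProb.le_one (hμ : IsProb μ) (i : ℕ) : μ i ≤ 1 :=
  hμ.2 ▸ hμ.summable.le_tsum i fun j _ => hμ.1 j

lemma IsProb.tsum_mul_const (hμ : IsProb μ) (c : ℝ) : ∑' v, μ v * c = c := by
  rw [tsum_mul_right, hμ.2, one_mul]

lemma IsProb.abs_tsum_mul_le (hμ : IsProb μ) {f : ℕ → ℝ} {C : ℝ} (hf : ∀ v, |f v| ≤ C) :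
    |∑' v, μ v * f v| ≤ C := by
  have hs := hμ.summable_mul hf
  rw [abs_le, ← hμ.tsum_mul_const C, ← neg_le, ← tsum_neg]
  exact ⟨(hs.neg).tsum_le_tsum (fun v => by nlinarith [neg_abs_le (f v), hf v, hμ.1 v])
      (hμ.summable.mul_right C),
    hs.tsum_le_tsum (fun v => by nlinarith [le_abs_self (f v), hf v, hμ.1 v])
      (hμ.summable.mul_right C)⟩

noncomputable def IsProb.toPMF (hμ : IsProb μ) : PMF ℕ :=
  ⟨fun v => ENNReal.ofReal (μ v), by
    rw [ENNReal.summable.hasSum_iff, ← ENNReal.ofReal_tsum_of_nonneg hμ.1 hμ.summable, hμ.2,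
      ENNReal.ofReal_one]⟩

lemma IsProb.toPMF_integral (hμ : IsProb μ) {f : ℕ → ℝ} {C : ℝ} (hf : ∀ v, |f v| ≤ C) :
    ∫ v, f v ∂hμ.toPMF.toMeasure = ∑' v, μ v * f v := by
  rw [PMF.integral_eq_tsum]
  · refine tsum_congr fun v => ?_
    change (ENNReal.ofReal (μ v)).toReal • f v = _
    rw [ENNReal.toReal_ofReal (hμ.1 v), smul_eq_mul]
  · exact Integrable.of_bound (measurable_of_countable f).aestronglyMeasurable C
      (Filter.Eventually.of_forall hf)

lemma abs_exp_mul_sub_le {l a C y : ℝ} (hy : |y| ≤ C) :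
    |exp (l * (y - a))| ≤ exp (|l| * (C + |a|)) := by
  rw [abs_exp, exp_le_exp]
  refine (le_abs_self _).trans ?_
  rw [abs_mul]
  exact mul_le_mul_of_nonneg_left ((abs_sub _ _).trans (by linarith)) (abs_nonneg l)

lemma IsProb.tsum_mul_exp_le_of_mem_Icc (hμ : IsProb μ) {Y : ℕ → ℝ} {a b : ℝ} (hY : ∀ v, Y v ∈ Set.Icc a b)
    (hY0 : ∑' v, μ v * Y v = 0) (l : ℝ) :
    ∑' v, μ v * exp (l * Y v) ≤ exp (l ^ 2 * (b - a) ^ 2 / 8) := by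
  have hYb : ∀ v, |Y v| ≤ |a| + |b| := fun v => abs_le.2
    ⟨by linarith [(hY v).1, neg_abs_le a, abs_nonneg b],
      by linarith [(hY v).2, le_abs_self b, abs_nonneg a]⟩
  have hmgf := (hasSubgaussianMGF_of_mem_Icc_of_integral_eq_zero (μ := hμ.toPMF.toMeasure)
    (measurable_of_countable Y).aemeasurable (Filter.Eventually.of_forall hY)
    (by rw [hμ.toPMF_integral hYb, hY0])).mgf_le l
  rw [mgf, hμ.toPMF_integral fun v => by
    simpa only [sub_zero, abs_zero, add_zero] using abs_exp_mul_sub_le (l := l) (a := 0) (hYb v)]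
    at hmgf
  refine hmgf.trans_eq (congrArg exp ?_)
  simp only [NNReal.coe_pow, NNReal.coe_div, coe_nnnorm, Real.norm_eq_abs]
  push_cast
  rw [div_pow, sq_abs]
  ring

lemma IsProb.tsum_mul_exp_le_of_sub_le (hμ : IsProb μ) {Y : ℕ → ℝ} {c : ℝ}
    (hY : ∀ v w, Y v - Y w ≤ c) (hY0 : ∑' v, μ v * Y v = 0) (l : ℝ) :
    ∑' v, μ v * exp (l * Y v) ≤ exp (l ^ 2 * c ^ 2 / 8) := by
  have hbdd : BddAbove (Set.range Y) := ⟨Y 0 + c, by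
    rintro _ ⟨v, rfl⟩
    linarith [hY v 0]⟩
  have h := hμ.tsum_mul_exp_le_of_mem_Icc (a := (⨆ v, Y v) - c) (b := ⨆ v, Y v)
    (fun v => ⟨by linarith [ciSup_le fun w => (by linarith [hY w v] : Y w ≤ Y v + c)],
      le_ciSup hbdd v⟩) hY0 l
  rwa [sub_sub_cancel] at h

noncomputable def prodWeight (μ : ℕ → ℝ) (m : ℕ) (x : Fin m → ℕ) : ℝ := ∏ t, μ (x t)

lemma expect_eq_tsum (m : ℕ) (f : (Fin m → ℕ) → ℝ) :
    expect μ m f = ∑' x, prodWeight μ m x * f x := rfl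

lemma prodWeight_nonneg (hμ : IsProb μ) {m : ℕ} (x : Fin m → ℕ) : 0 ≤ prodWeight μ m x :=
  Finset.prod_nonneg fun _ _ => hμ.1 _

lemma prodWeight_cons {m : ℕ} (v : ℕ) (x : Fin m → ℕ) :
    prodWeight μ (m + 1) (Fin.cons v x) = μ v * prodWeight μ m x := by
  simp [prodWeight, Fin.prod_univ_succ]

lemma prodWeight_comp_consEquiv (m : ℕ) :
    prodWeight μ (m + 1) ∘ Fin.consEquiv (fun _ => ℕ) = fun p => μ p.1 * prodWeight μ m p.2 :=
  funext fun p => prodWeight_cons p.1 p.2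

lemma hasSum_prodWeight (hμ : IsProb μ) : ∀ m, HasSum (prodWeight μ m) 1
  | 0 => by
    convert hasSum_fintype (prodWeight μ 0)
    simp [prodWeight]
  | m + 1 => by
    rw [← (Fin.consEquiv fun _ => ℕ).hasSum_iff, prodWeight_comp_consEquiv, ← one_mul 1]
    exact hμ.summable.hasSum_iff.2 hμ.2 |>.mul (hasSum_prodWeight hμ m)
      (hμ.summable.mul_of_nonneg (hasSum_prodWeight hμ m).summable hμ.1 (prodWeight_nonneg hμ))

section Expectation

variable {m : ℕ} {f g : (Fin m → ℕ) → ℝ} {C C' : ℝ}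

lemma summable_prodWeight_mul (hμ : IsProb μ) (hf : ∀ x, |f x| ≤ C) :
    Summable fun x => prodWeight μ m x * f x :=
  summable_mul_of_abs_le (hasSum_prodWeight hμ m).summable (prodWeight_nonneg hμ) hf

lemma expect_const_mul (c : ℝ) (f : (Fin m → ℕ) → ℝ) :
    expect μ m (fun x => c * f x) = c * expect μ m f := by
  simp only [expect_eq_tsum, mul_left_comm _ c, tsum_mul_left]

lemma expect_mul_const (f : (Fin m → ℕ) → ℝ) (c : ℝ) :
    expect μ m (fun x => f x * c) = expect μ m f * c := by
  simp only [expect_eq_tsum, ← mul_assoc, tsum_mul_right]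

lemma expect_sub (hμ : IsProb μ) (hf : ∀ x, |f x| ≤ C) (hg : ∀ x, |g x| ≤ C') :
    expect μ m (fun x => f x - g x) = expect μ m f - expect μ m g := by
  simp only [expect_eq_tsum, mul_sub]
  exact (summable_prodWeight_mul hμ hf).tsum_sub (summable_prodWeight_mul hμ hg)

lemma expect_mono (hμ : IsProb μ) (hf : ∀ x, |f x| ≤ C) (hg : ∀ x, |g x| ≤ C')
    (h : ∀ x, f x ≤ g x) : expect μ m f ≤ expect μ m g :=
  (summable_prodWeight_mul hμ hf).tsum_le_tsum
    (fun x => mul_le_mul_of_nonneg_left (h x) (prodWeight_nonneg hμ x))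
    (summable_prodWeight_mul hμ hg)

end Expectation

lemma expect_fin_zero (f : (Fin 0 → ℕ) → ℝ) : expect μ 0 f = f default := by
  rw [expect_eq_tsum, tsum_eq_single default fun x hx => (hx (Subsingleton.elim _ _)).elim]
  simp [prodWeight]

section Fubini

variable {m : ℕ} {f : (Fin (m + 1) → ℕ) → ℝ} {C : ℝ}

lemma expect_succ_eq_tsum_prod (f : (Fin (m + 1) → ℕ) → ℝ) :
    expect μ (m + 1) f
      = ∑' p : ℕ × (Fin m → ℕ), μ p.1 * (prodWeight μ m p.2 * f (Fin.cons p.1 p.2)) := by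
  rw [expect_eq_tsum, ← (Fin.consEquiv fun _ => ℕ).tsum_eq]
  exact tsum_congr fun p => by
    rw [show Fin.consEquiv (fun _ => ℕ) p = Fin.cons p.1 p.2 from rfl, prodWeight_cons, mul_assoc]

lemma summable_prodWeight_cons_mul (hμ : IsProb μ) (hf : ∀ x, |f x| ≤ C) :
    Summable fun p : ℕ × (Fin m → ℕ) => μ p.1 * (prodWeight μ m p.2 * f (Fin.cons p.1 p.2)) := by
  simp only [← mul_assoc]
  exact summable_mul_of_abs_le
    (hμ.summable.mul_of_nonneg (hasSum_prodWeight hμ m).summable hμ.1 (prodWeight_nonneg hμ))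
    (fun p => mul_nonneg (hμ.1 _) (prodWeight_nonneg hμ _)) fun p => hf _

lemma expect_succ_eq_tsum_tsum (hμ : IsProb μ) (hf : ∀ x, |f x| ≤ C) :
    expect μ (m + 1) f
      = ∑' (v : ℕ) (x : Fin m → ℕ), μ v * (prodWeight μ m x * f (Fin.cons v x)) := by
  rw [expect_succ_eq_tsum_prod, (summable_prodWeight_cons_mul hμ hf).tsum_prod' fun v =>
    (summable_prodWeight_mul hμ fun x => hf (Fin.cons v x)).mul_left (μ v)]

lemma expect_succ (hμ : IsProb μ) (hf : ∀ x, |f x| ≤ C) :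
    expect μ (m + 1) f = ∑' v, μ v * expect μ m (fun x => f (Fin.cons v x)) := by
  rw [expect_succ_eq_tsum_tsum hμ hf]
  exact tsum_congr fun v => by rw [expect_eq_tsum, tsum_mul_left]

lemma expect_succ' (hμ : IsProb μ) (hf : ∀ x, |f x| ≤ C) :
    expect μ (m + 1) f = expect μ m (fun x => ∑' v, μ v * f (Fin.cons v x)) := by
  rw [expect_succ_eq_tsum_tsum hμ hf, expect_eq_tsum, ← Summable.tsum_comm'
    (f := fun v x => μ v * (prodWeight μ m x * f (Fin.cons v x))) (summable_prodWeight_cons_mul hμ hf)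
    (fun v => (summable_prodWeight_mul hμ fun x => hf (Fin.cons v x)).mul_left (μ v))
    fun x => ((hμ.summable_mul fun v => hf (Fin.cons v x)).mul_left (prodWeight μ m x)).congr
      fun v => by ring]
  refine tsum_congr fun x => ?_
  rw [← tsum_mul_left]
  exact tsum_congr fun v => by ring

end Fubini

section Probability

variable {m : ℕ}

lemma probOf_eq_tsum (A : Set (Fin m → ℕ)) :
    probOf μ m A = ∑' x, A.indicator (prodWeight μ m) x := rfl

lemma summable_indicator_prodWeight (hμ : IsProb μ) (A : Set (Fin m → ℕ)) :
    Summable (A.indicator (prodWeight μ m)) :=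
  (hasSum_prodWeight hμ m).summable.of_nonneg_of_le
    (Set.indicator_nonneg fun x _ => prodWeight_nonneg hμ x)
    (Set.indicator_le_self' fun x _ => prodWeight_nonneg hμ x)

lemma probOf_add_probOf_compl (hμ : IsProb μ) (A : Set (Fin m → ℕ)) :
    probOf μ m A + probOf μ m Aᶜ = 1 := by
  rw [probOf_eq_tsum, probOf_eq_tsum, ← (summable_indicator_prodWeight hμ A).tsum_add
    (summable_indicator_prodWeight hμ Aᶜ)]
  simp only [Set.indicator_self_add_compl_apply]
  exact (hasSum_prodWeight hμ m).tsum_eq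

lemma probOf_mono (hμ : IsProb μ) {A B : Set (Fin m → ℕ)} (h : A ⊆ B) :
    probOf μ m A ≤ probOf μ m B :=
  (summable_indicator_prodWeight hμ A).tsum_le_tsum
    (Set.indicator_le_indicator_of_subset h fun x => prodWeight_nonneg hμ x)
    (summable_indicator_prodWeight hμ B)

lemma probOf_le_expect (hμ : IsProb μ) {A : Set (Fin m → ℕ)} {g : (Fin m → ℕ) → ℝ} {C : ℝ}
    (hg : ∀ x, |g x| ≤ C) (hg0 : ∀ x, 0 ≤ g x) (hA : ∀ x ∈ A, 1 ≤ g x) :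
    probOf μ m A ≤ expect μ m g := by
  refine (summable_indicator_prodWeight hμ A).tsum_le_tsum (fun x => ?_)
    (summable_prodWeight_mul hμ hg)
  by_cases hx : x ∈ A
  · rw [Set.indicator_of_mem hx]
    exact le_mul_of_one_le_right (prodWeight_nonneg hμ x) (hA x hx)
  · rw [Set.indicator_of_notMem hx]
    exact mul_nonneg (prodWeight_nonneg hμ x) (hg0 x)

end Probability

def HasBoundedDifferences {m : ℕ} (f : (Fin m → ℕ) → ℝ) (c : ℝ) : Prop :=
  ∀ (x x' : Fin m → ℕ) (t : Fin m), (∀ s, s ≠ t → x s = x' s) → f x - f x' ≤ c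

namespace HasBoundedDifferences

variable {m : ℕ} {c c' : ℝ}

lemma sub {f g : (Fin m → ℕ) → ℝ} (hf : HasBoundedDifferences f c)
    (hg : HasBoundedDifferences g c') : HasBoundedDifferences (fun x => f x - g x) (c + c') :=
  fun x x' t h => by linarith [hf x x' t h, hg x' x t fun s hs => (h s hs).symm]

lemma comp_cons {f : (Fin (m + 1) → ℕ) → ℝ} (hf : HasBoundedDifferences f c) (v : ℕ) :
    HasBoundedDifferences (fun x => f (Fin.cons v x)) c := fun x x' t h =>
  hf _ _ t.succ fun s hs => by
    cases s using Fin.cases with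
    | zero => rfl
    | succ j => simpa using h j fun hj => hs (hj ▸ rfl)

lemma sub_cons_le {f : (Fin (m + 1) → ℕ) → ℝ} (hf : HasBoundedDifferences f c) (v w : ℕ)
    (x : Fin m → ℕ) : f (Fin.cons v x) - f (Fin.cons w x) ≤ c :=
  hf _ _ 0 fun s hs => by
    obtain ⟨j, rfl⟩ := Fin.exists_succ_eq.2 hs
    simp

lemma abs_sub_le_mul : ∀ {m : ℕ} {f : (Fin m → ℕ) → ℝ}, HasBoundedDifferences f c →
    ∀ x y, |f x - f y| ≤ m * c
  | 0, f, _, x, y => by simp [Subsingleton.elim x y]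
  | m + 1, f, hf, x, y => by
    rw [← Fin.cons_self_tail x, ← Fin.cons_self_tail y]
    have h1 := abs_sub_le_iff.2 ⟨hf.sub_cons_le (x 0) (y 0) (Fin.tail x),
      hf.sub_cons_le (y 0) (x 0) (Fin.tail x)⟩
    have h2 := (hf.comp_cons (y 0)).abs_sub_le_mul (Fin.tail x) (Fin.tail y)
    calc _ ≤ |f (Fin.cons (x 0) (Fin.tail x)) - f (Fin.cons (y 0) (Fin.tail x))|
          + |f (Fin.cons (y 0) (Fin.tail x)) - f (Fin.cons (y 0) (Fin.tail y))| :=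
          abs_sub_le _ _ _
      _ ≤ (m + 1 : ℕ) * c := by push_cast; linarith

lemma exists_abs_le {f : (Fin m → ℕ) → ℝ} (hf : HasBoundedDifferences f c) :
    ∃ C, ∀ x, |f x| ≤ C :=
  ⟨|f 0| + m * c, fun x => by linarith [abs_sub_abs_le_abs_sub (f x) (f 0), hf.abs_sub_le_mul x 0]⟩

lemma tsum_mul_cons (hμ : IsProb μ) {f : (Fin (m + 1) → ℕ) → ℝ}
    (hf : HasBoundedDifferences f c) :
    HasBoundedDifferences (fun x => ∑' v, μ v * f (Fin.cons v x)) c := by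
  obtain ⟨C, hC⟩ := hf.exists_abs_le
  intro x x' t h
  have hs := fun y : Fin m → ℕ => hμ.summable_mul fun v => hC (Fin.cons v y)
  calc ∑' v, μ v * f (Fin.cons v x) - ∑' v, μ v * f (Fin.cons v x')
      = ∑' v, μ v * (f (Fin.cons v x) - f (Fin.cons v x')) := by
        rw [← (hs x).tsum_sub (hs x')]
        simp only [mul_sub]
    _ ≤ ∑' v, μ v * c :=
        (hμ.summable_mul fun v => (abs_sub _ _).trans (add_le_add (hC _) (hC _))).tsum_le_tsum
          (fun v => mul_le_mul_of_nonneg_left (hf.comp_cons v x x' t h) (hμ.1 v))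
          (hμ.summable.mul_right c)
    _ = c := hμ.tsum_mul_const c

end HasBoundedDifferences

section McDiarmid

variable {c : ℝ}

lemma HasBoundedDifferences.expect_exp_le (hμ : IsProb μ) (l : ℝ) :
    ∀ {m : ℕ} {f : (Fin m → ℕ) → ℝ}, HasBoundedDifferences f c →
      expect μ m (fun x => exp (l * (f x - expect μ m f))) ≤ exp (m * (l ^ 2 * c ^ 2 / 8))
  | 0, f, _ => by simp [expect_fin_zero]
  | m + 1, f, hf => by
    obtain ⟨C, hC⟩ := hf.exists_abs_le
    set g : (Fin m → ℕ) → ℝ := fun x => ∑' v, μ v * f (Fin.cons v x)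
    have hg : HasBoundedDifferences g c := hf.tsum_mul_cons hμ
    obtain ⟨Cg, hCg⟩ := hg.exists_abs_le
    have hE : expect μ (m + 1) f = expect μ m g := expect_succ' hμ hC
    set E := expect μ (m + 1) f
    set K := exp (l ^ 2 * c ^ 2 / 8)
    -- Hoeffding's lemma in the first coordinate, the others being fixed
    have hcond : ∀ x, ∑' v, μ v * exp (l * (f (Fin.cons v x) - E)) ≤ exp (l * (g x - E)) * K := by
      intro x
      have hY0 : ∑' v, μ v * (f (Fin.cons v x) - g x) = 0 := by
        simp only [mul_sub]
        rw [(hμ.summable_mul fun v => hC _).tsum_sub (hμ.summable.mul_right _), hμ.tsum_mul_const,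
          sub_self]
      calc ∑' v, μ v * exp (l * (f (Fin.cons v x) - E))
          = exp (l * (g x - E)) * ∑' v, μ v * exp (l * (f (Fin.cons v x) - g x)) := by
            rw [← tsum_mul_left]
            refine tsum_congr fun v => ?_
            rw [mul_left_comm, ← exp_add]
            ring_nf
        _ ≤ exp (l * (g x - E)) * K := mul_le_mul_of_nonneg_left
            (hμ.tsum_mul_exp_le_of_sub_le (fun v w => by linarith [hf.sub_cons_le v w x]) hY0 l)
            (exp_pos _).le
    calc expect μ (m + 1) (fun x => exp (l * (f x - E)))
        = expect μ m (fun x => ∑' v, μ v * exp (l * (f (Fin.cons v x) - E))) :=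
          expect_succ' hμ fun x => abs_exp_mul_sub_le (hC x)
      _ ≤ expect μ m (fun x => exp (l * (g x - E)) * K) :=
          expect_mono hμ (fun x => hμ.abs_tsum_mul_le fun v => abs_exp_mul_sub_le (hC _))
            (fun x => (abs_mul _ _).trans_le
              (mul_le_mul_of_nonneg_right (abs_exp_mul_sub_le (hCg x)) (abs_nonneg _)))
            hcond
      _ = expect μ m (fun x => exp (l * (g x - expect μ m g))) * K := by
          rw [expect_mul_const, hE]
      _ ≤ exp (m * (l ^ 2 * c ^ 2 / 8)) * K :=
          mul_le_mul_of_nonneg_right (hg.expect_exp_le hμ l) (exp_pos _).le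
      _ = exp ((m + 1 : ℕ) * (l ^ 2 * c ^ 2 / 8)) := by
          rw [← exp_add]
          push_cast
          ring_nf

theorem HasBoundedDifferences.probOf_le (hμ : IsProb μ) {m : ℕ} {f : (Fin m → ℕ) → ℝ}
    (hf : HasBoundedDifferences f c) {ε : ℝ} (hε : 0 ≤ ε) :
    probOf μ m {x | expect μ m f + ε ≤ f x} ≤ exp (-2 * ε ^ 2 / (m * c ^ 2)) := by
  obtain ⟨C, hC⟩ := hf.exists_abs_le
  set E := expect μ m f
  -- the Chernoff parameter optimising the bound
  set l := 4 * ε / (m * c ^ 2)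
  have hl : 0 ≤ l := by positivity
  calc probOf μ m {x | E + ε ≤ f x}
      ≤ expect μ m (fun x => exp (l * (f x - E)) * exp (-(l * ε))) :=
        probOf_le_expect hμ (fun x => (abs_mul _ _).trans_le
            (mul_le_mul_of_nonneg_right (abs_exp_mul_sub_le (hC x)) (abs_nonneg _)))
          (fun x => by positivity) fun x hx => by
            rw [← exp_add]
            exact one_le_exp (by nlinarith [hx.out])
    _ = expect μ m (fun x => exp (l * (f x - E))) * exp (-(l * ε)) := expect_mul_const _ _
    _ ≤ exp (m * (l ^ 2 * c ^ 2 / 8)) * exp (-(l * ε)) :=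
        mul_le_mul_of_nonneg_right (hf.expect_exp_le hμ l) (exp_pos _).le
    _ = exp (-2 * ε ^ 2 / (m * c ^ 2)) := by
        rw [← exp_add]
        congr 1
        by_cases h : (m : ℝ) * c ^ 2 = 0
        · simp [l, h]
        · simp only [l]
          field_simp
          ring

end McDiarmid

lemma sqrt_add_le_sqrt_add_sqrt {a b : ℝ} (ha : 0 ≤ a) (hb : 0 ≤ b) : √(a + b) ≤ √a + √b :=
  sqrt_le_iff.2 ⟨by positivity, by nlinarith [sq_sqrt ha, sq_sqrt hb, sqrt_nonneg a, sqrt_nonneg b]⟩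

section EmpiricalMeasure

variable {m : ℕ} (x : Fin m → ℕ)

def sampleCount (i : ℕ) : ℕ := (Finset.univ.filter fun t => x t = i).card

lemma sampleCount_cons (v j : ℕ) :
    sampleCount (Fin.cons v x : Fin (m + 1) → ℕ) j = (if v = j then 1 else 0) + sampleCount x j := by
  simp only [sampleCount, Finset.card_filter, Fin.sum_univ_succ, Fin.cons_zero, Fin.cons_succ]

lemma sampleCount_le (j : ℕ) : sampleCount x j ≤ m :=
  (Finset.card_filter_le _ _).trans_eq (Finset.card_fin m)

lemma empMeas_eq_sampleCount_div (i : ℕ) : empMeas m x i = sampleCount x i / m := rfl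

lemma empMeas_nonneg (i : ℕ) : 0 ≤ empMeas m x i := by
  rw [empMeas_eq_sampleCount_div]
  positivity

lemma empMeas_eq_sum (i : ℕ) : empMeas m x i = ∑ t, if i = x t then (1 / m : ℝ) else 0 := by
  simp_rw [empMeas, Finset.natCast_card_filter, Finset.sum_div, eq_comm (a := i)]
  exact Finset.sum_congr rfl fun t _ => by split_ifs <;> simp

lemma hasSum_empMeas (hm : 0 < m) : HasSum (empMeas m x) 1 := by
  have h := hasSum_sum (s := Finset.univ) fun t _ => hasSum_ite_eq (x t) (1 / m : ℝ)
  rw [Finset.sum_const, Finset.card_univ, Fintype.card_fin, nsmul_eq_mul,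
    mul_one_div_cancel (by positivity)] at h
  exact h.congr_fun fun i => empMeas_eq_sum x i

lemma sqrt_empMeas_le_mul (i : ℕ) : √(empMeas m x i) ≤ √m * empMeas m x i := by
  rcases Nat.eq_zero_or_pos m with rfl | hm
  · simp [empMeas]
  have hm' : (0 : ℝ) < m := by exact_mod_cast hm
  have hk : √(sampleCount x i : ℝ) ≤ sampleCount x i :=
    sqrt_le_self_iff.2 <| by
      rcases Nat.eq_zero_or_pos (sampleCount x i) with h | h
      · left; simp [h]
      · right; exact_mod_cast h
  have hsq : √m * (sampleCount x i / m) = sampleCount x i / √m := by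
    rw [eq_div_iff (sqrt_pos.2 hm').ne', mul_right_comm, mul_self_sqrt hm'.le,
      mul_div_cancel₀ _ hm'.ne']
  rw [empMeas_eq_sampleCount_div, sqrt_div (Nat.cast_nonneg _), hsq]
  exact div_le_div_of_nonneg_right hk (sqrt_nonneg _)

lemma summable_sqrt_empMeas (hm : 0 < m) : Summable fun i => √(empMeas m x i) :=
  ((hasSum_empMeas x hm).summable.mul_left √m).of_nonneg_of_le (fun _ => sqrt_nonneg _)
    (sqrt_empMeas_le_mul x)

lemma tsum_sqrt_empMeas_le (hm : 0 < m) : ∑' i, √(empMeas m x i) ≤ √m := by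
  calc ∑' i, √(empMeas m x i) ≤ ∑' i, √m * empMeas m x i :=
        (summable_sqrt_empMeas x hm).tsum_le_tsum (sqrt_empMeas_le_mul x)
          ((hasSum_empMeas x hm).summable.mul_left √m)
    _ = √m := by rw [tsum_mul_left, (hasSum_empMeas x hm).tsum_eq, mul_one]

lemma abs_empMeas_sub_le (hμ : IsProb μ) (i : ℕ) : |empMeas m x i - μ i| ≤ empMeas m x i + μ i :=
  (abs_sub _ _).trans_eq <| by rw [abs_of_nonneg (empMeas_nonneg x i), abs_of_nonneg (hμ.1 i)]

lemma summable_abs_empMeas_sub (hμ : IsProb μ) (hm : 0 < m) :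
    Summable fun i => |empMeas m x i - μ i| :=
  ((hasSum_empMeas x hm).summable.add hμ.summable).of_nonneg_of_le (fun _ => abs_nonneg _)
    (abs_empMeas_sub_le x hμ)

lemma tsum_abs_empMeas_sub_le (hμ : IsProb μ) (hm : 0 < m) :
    ∑' i, |empMeas m x i - μ i| ≤ 2 := by
  refine hasSum_le (abs_empMeas_sub_le x hμ) (summable_abs_empMeas_sub x hμ hm).hasSum ?_
  rw [← one_add_one_eq_two]
  exact (hasSum_empMeas x hm).add (hμ.summable.hasSum_iff.2 hμ.2)

lemma abs_tvDist_empMeas_le_one (hμ : IsProb μ) (hm : 0 < m) : |tvDist (empMeas m x) μ| ≤ 1 := by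
  have h2 := tsum_abs_empMeas_sub_le x hμ hm
  have h0 : 0 ≤ ∑' i, |empMeas m x i - μ i| := tsum_nonneg fun i => abs_nonneg _
  rw [tvDist, abs_le]
  constructor <;> linarith

lemma abs_Phi_empMeas_le_one (hm : 0 < m) : |Phi m (empMeas m x)| ≤ 1 := by
  rw [Phi, abs_of_nonneg (by positivity), one_div_mul_eq_div,
    div_le_one (sqrt_pos.2 (by exact_mod_cast hm))]
  exact tsum_sqrt_empMeas_le x hm

variable {x}

lemma empMeas_sub_empMeas {x' : Fin m → ℕ} {t : Fin m} (h : ∀ s, s ≠ t → x s = x' s) (i : ℕ) :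
    empMeas m x i - empMeas m x' i
      = (if i = x t then (1 / m : ℝ) else 0) - (if i = x' t then (1 / m : ℝ) else 0) := by
  rw [empMeas_eq_sum, empMeas_eq_sum, ← Finset.sum_sub_distrib,
    Finset.sum_eq_single t (fun s _ hs => by rw [h s hs, sub_self]) (by simp)]

end EmpiricalMeasure

section BoundedDifferences

variable {m : ℕ}

lemma hasBoundedDifferences_tvDist_empMeas (hμ : IsProb μ) (hm : 0 < m) :
    HasBoundedDifferences (fun x => tvDist (empMeas m x) μ) (1 / m) := by
  intro x x' t h
  have hpt : ∀ i, |empMeas m x i - μ i| - |empMeas m x' i - μ i|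
      ≤ (if i = x t then (1 / m : ℝ) else 0) + (if i = x' t then (1 / m : ℝ) else 0) := fun i => by
    refine (abs_sub_abs_le_abs_sub _ _).trans ?_
    rw [sub_sub_sub_cancel_right, empMeas_sub_empMeas h]
    refine (abs_sub _ _).trans_eq ?_
    split_ifs <;> simp
  calc tvDist (empMeas m x) μ - tvDist (empMeas m x') μ
      = 1 / 2 * ∑' i, (|empMeas m x i - μ i| - |empMeas m x' i - μ i|) := by
        rw [tvDist, tvDist, ← mul_sub, (summable_abs_empMeas_sub x hμ hm).tsum_sub
          (summable_abs_empMeas_sub x' hμ hm)]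
    _ ≤ 1 / 2 * (1 / m + 1 / m) := mul_le_mul_of_nonneg_left
        (hasSum_le hpt ((summable_abs_empMeas_sub x hμ hm).sub
          (summable_abs_empMeas_sub x' hμ hm)).hasSum
          ((hasSum_ite_eq (x t) _).add (hasSum_ite_eq (x' t) _))) (by norm_num)
    _ = 1 / m := by ring

lemma hasBoundedDifferences_Phi_empMeas (hm : 0 < m) :
    HasBoundedDifferences (fun x => Phi m (empMeas m x)) (1 / m) := by
  intro x x' t h
  have hpt : ∀ i, √(empMeas m x i) - √(empMeas m x' i) ≤ if i = x t then 1 / √m else 0 :=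
    fun i => by
      have hle : empMeas m x i ≤ empMeas m x' i + if i = x t then (1 / m : ℝ) else 0 := by
        have h1 := empMeas_sub_empMeas h i
        have h2 : (0 : ℝ) ≤ if i = x' t then (1 / m : ℝ) else 0 := by positivity
        linarith
      have h3 := (sqrt_le_sqrt hle).trans
        (sqrt_add_le_sqrt_add_sqrt (empMeas_nonneg x' i) (by positivity))
      split_ifs at h3 ⊢
      · rw [one_div, sqrt_inv, ← one_div] at h3
        linarith
      · simpa using h3
  calc Phi m (empMeas m x) - Phi m (empMeas m x')
      = 1 / √m * ∑' i, (√(empMeas m x i) - √(empMeas m x' i)) := by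
        rw [Phi, Phi, ← mul_sub, (summable_sqrt_empMeas x hm).tsum_sub
          (summable_sqrt_empMeas x' hm)]
    _ ≤ 1 / √m * (1 / √m) := mul_le_mul_of_nonneg_left
        (hasSum_le hpt ((summable_sqrt_empMeas x hm).sub (summable_sqrt_empMeas x' hm)).hasSum
          (hasSum_ite_eq (x t) _)) (by positivity)
    _ = 1 / m := by rw [one_div_mul_one_div, mul_self_sqrt (Nat.cast_nonneg m)]

end BoundedDifferences

lemma abs_le_sq_add_sq_div {r : ℝ} (hr : 0 < r) (y : ℝ) : |y| ≤ (y ^ 2 + r ^ 2) / (2 * r) := by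
  rw [le_div_iff₀ (by positivity)]
  nlinarith [sq_nonneg (|y| - r), sq_abs y]

lemma three_div_mul_sub_le_two_mul_sqrt {r y : ℝ} (hr : 0 < r) (hy : 0 ≤ y) :
    3 / r * y - y ^ 2 / r ^ 3 ≤ 2 * √y := by
  have hu : 0 ≤ √y := sqrt_nonneg y
  rw [← sub_nonneg]
  -- with `u = √y`: `2 r^3 u - 3 r^2 u^2 + u^4 = u (u - r)^2 (u + 2 r)`
  have : 2 * √y - (3 / r * y - y ^ 2 / r ^ 3) = √y * (√y - r) ^ 2 * (√y + 2 * r) / r ^ 3 := by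
    nth_rw 2 [← sq_sqrt hy]
    nth_rw 3 [← sq_sqrt hy]
    field_simp
    ring
  rw [this]
  positivity

/-- `binomExpect p m F` is `E[F(K)]` for `K ~ Bin(m, p)`, by conditioning on the first trial. -/
noncomputable def binomExpect (p : ℝ) : ℕ → (ℕ → ℝ) → ℝ
  | 0, F => F 0
  | m + 1, F => p * binomExpect p m (fun k => F (k + 1)) + (1 - p) * binomExpect p m F

namespace binomExpect

variable {p : ℝ}

@[simp] lemma const (m : ℕ) (c : ℝ) : binomExpect p m (fun _ => c) = c := by
  induction m with
  | zero => rfl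
  | succ m ih => simp only [binomExpect, ih]; ring

@[simp] lemma add (m : ℕ) (F G : ℕ → ℝ) :
    binomExpect p m (fun k => F k + G k) = binomExpect p m F + binomExpect p m G := by
  induction m generalizing F G with
  | zero => rfl
  | succ m ih => simp only [binomExpect, ih]; ring

@[simp] lemma const_mul (m : ℕ) (c : ℝ) (F : ℕ → ℝ) :
    binomExpect p m (fun k => c * F k) = c * binomExpect p m F := by
  induction m generalizing F with
  | zero => rfl
  | succ m ih => simp only [binomExpect, ih]; ring

lemma mono (hp0 : 0 ≤ p) (hp1 : p ≤ 1) (m : ℕ) {F G : ℕ → ℝ} (h : ∀ k, F k ≤ G k) :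
    binomExpect p m F ≤ binomExpect p m G := by
  induction m generalizing F G with
  | zero => exact h 0
  | succ m ih =>
    have h1 := mul_le_mul_of_nonneg_left (ih fun k => h (k + 1)) hp0
    have h2 := mul_le_mul_of_nonneg_left (ih h) (sub_nonneg.2 hp1)
    simp only [binomExpect]
    linarith

@[simp] lemma natCast (m : ℕ) : binomExpect p m (fun k => (k : ℝ)) = m * p := by
  induction m with
  | zero => simp [binomExpect]
  | succ m ih =>
    simp only [binomExpect, Nat.cast_add, Nat.cast_one, add, const, ih]
    ring

@[simp] lemma natCast_sq (m : ℕ) :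
    binomExpect p m (fun k => (k : ℝ) ^ 2) = m * p + m * (m - 1) * p ^ 2 := by
  induction m with
  | zero => simp [binomExpect]
  | succ m ih =>
    simp only [binomExpect, Nat.cast_add, Nat.cast_one, add_sq, add, const_mul, const, ih,
      natCast, mul_one, one_pow]
    ring

@[simp] lemma ite_eq_zero (m : ℕ) :
    binomExpect p m (fun k => if k = 0 then 1 else 0) = (1 - p) ^ m := by
  induction m with
  | zero => simp [binomExpect]
  | succ m ih =>
    simp only [binomExpect, Nat.add_eq_zero_iff, one_ne_zero, and_false, ↓reduceIte, const,
      mul_zero, ih, zero_add, pow_succ]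
    ring

lemma abs_sub_le_of_mean_le_one (hp0 : 0 ≤ p) (hp1 : p ≤ 1) {m : ℕ} (hs : m * p ≤ 1) :
    binomExpect p m (fun k => |k - m * p|) ≤ 2 * binomExpect p m (fun k => √k) := by
  set s := (m : ℝ) * p
  have hup : binomExpect p m (fun k => |k - s|)
      ≤ binomExpect p m (fun k => k + -s + 2 * s * if k = 0 then 1 else 0) :=
    mono hp0 hp1 m fun k => by
      rcases k with _ | k
      · simp only [CharP.cast_eq_zero, zero_sub, abs_neg, abs_of_nonneg (by positivity : 0 ≤ s),
          zero_add, ↓reduceIte, mul_one, le_neg_add_iff_add_le]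
        linarith
      · simp only [Nat.cast_add, Nat.cast_one, Nat.add_one_ne_zero, if_false, mul_zero, add_zero]
        rw [abs_of_nonneg (by linarith [(Nat.cast_nonneg k : (0 : ℝ) ≤ k)])]
        linarith
  have hlow : binomExpect p m (fun k => 2 + -2 * if k = 0 then 1 else 0)
      ≤ binomExpect p m (fun k => 2 * √k) :=
    mono hp0 hp1 m fun k => by
      rcases k with _ | k
      · simp
      · simp only [Nat.add_one_ne_zero, if_false, mul_zero, add_zero]
        nlinarith [one_le_sqrt.2 (by simp : (1 : ℝ) ≤ (k + 1 : ℕ))]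
  simp only [add, const_mul, const, natCast, ite_eq_zero] at hup hlow
  -- Bernoulli: `(1 + m p) (1 - p)^m ≤ (1 + p)^m (1 - p)^m = (1 - p^2)^m ≤ 1`
  have hbern : (1 + s) * (1 - p) ^ m ≤ 1 := calc
    (1 + s) * (1 - p) ^ m ≤ (1 + p) ^ m * (1 - p) ^ m :=
      mul_le_mul_of_nonneg_right (one_add_mul_le_pow (by linarith) m) (by positivity)
    _ = (1 - p ^ 2) ^ m := by rw [← mul_pow]; ring
    _ ≤ 1 := pow_le_one₀ (by nlinarith) (by nlinarith)
  linarith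

lemma abs_sub_le_of_one_le_mean (hp0 : 0 ≤ p) (hp1 : p ≤ 1) {m : ℕ} (hs : 1 ≤ m * p) :
    binomExpect p m (fun k => |k - m * p|) ≤ 2 * binomExpect p m (fun k => √k) := by
  set s := (m : ℝ) * p
  set r := √s
  have hr : 1 ≤ r := one_le_sqrt.2 hs
  have hr0 : 0 < r := by linarith
  have hrs : s = r ^ 2 := (sq_sqrt (by linarith)).symm
  have hup : binomExpect p m (fun k => |k - s|) ≤ binomExpect p m
      (fun k => 1 / (2 * r) * (k : ℝ) ^ 2 + -(s / r) * k + (s ^ 2 + s) / (2 * r)) :=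
    mono hp0 hp1 m fun k => (abs_le_sq_add_sq_div hr0 _).trans_eq <| by
      rw [hrs]
      field_simp
      ring
  have hlow : binomExpect p m (fun k => 3 / r * (k : ℝ) + -(1 / r ^ 3) * (k : ℝ) ^ 2)
      ≤ binomExpect p m (fun k => 2 * √k) :=
    mono hp0 hp1 m fun k => le_of_eq_of_le (by ring)
      (three_div_mul_sub_le_two_mul_sqrt hr0 (Nat.cast_nonneg k))
  simp only [add, const_mul, const, natCast, natCast_sq] at hup hlow
  have hm2 : (m : ℝ) * (m - 1) * p ^ 2 = s ^ 2 - s * p := by ring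
  have hA : 1 / (2 * r) * (s + (s ^ 2 - s * p)) + -(s / r) * s + (s ^ 2 + s) / (2 * r)
      = r - r * p / 2 := by
    rw [hrs]
    field_simp
    ring
  have hB : 3 / r * s + -(1 / r ^ 3) * (s + (s ^ 2 - s * p)) = 2 * r - (1 - p) / r := by
    rw [hrs]
    field_simp
    ring
  have hpr : (1 - p) / r ≤ r := (div_le_one hr0 |>.2 (by linarith)).trans hr
  rw [hm2, hA] at hup
  rw [hm2, hB] at hlow
  nlinarith

lemma abs_sub_le (hp0 : 0 ≤ p) (hp1 : p ≤ 1) (m : ℕ) :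
    binomExpect p m (fun k => |k - m * p|) ≤ 2 * binomExpect p m (fun k => √k) :=
  (le_total (m * p) 1).elim (abs_sub_le_of_mean_le_one hp0 hp1)
    (abs_sub_le_of_one_le_mean hp0 hp1)

end binomExpect

lemma expect_comp_sampleCount (hμ : IsProb μ) (j : ℕ) :
    ∀ (m : ℕ) (F : ℕ → ℝ), expect μ m (fun x => F (sampleCount x j)) = binomExpect (μ j) m F
  | 0, F => by simp [expect_fin_zero, sampleCount, binomExpect]
  | m + 1, F => by
    have hF : ∀ x : Fin (m + 1) → ℕ, |F (sampleCount x j)| ≤ ∑ k ∈ Finset.range (m + 2), |F k| :=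
      fun x => Finset.single_le_sum (f := fun k => |F k|) (fun k _ => abs_nonneg _)
        (Finset.mem_range.2 (Nat.lt_succ_of_le (sampleCount_le x j)))
    set A := binomExpect (μ j) m (fun k => F (k + 1))
    set B := binomExpect (μ j) m F
    have hcons : ∀ v, expect μ m (fun x => F (sampleCount (Fin.cons v x : Fin (m + 1) → ℕ) j))
        = if v = j then A else B := fun v => by
      simp only [sampleCount_cons]
      split_ifs
      · simp only [add_comm 1, expect_comp_sampleCount hμ j m fun k => F (k + 1), A]
      · simp only [zero_add, expect_comp_sampleCount hμ j m F, B]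
    have hsum : HasSum (fun v => μ v * if v = j then A else B) (μ j * A + (1 - μ j) * B) := by
      rw [show μ j * A + (1 - μ j) * B = 1 * B + μ j * (A - B) by ring]
      refine (((hμ.summable.hasSum_iff.2 hμ.2).mul_right B).add
        (hasSum_ite_eq j (μ j * (A - B)))).congr_fun fun v => ?_
      split_ifs with h
      · rw [h]; ring
      · ring
    rw [expect_succ hμ hF]
    simp only [hcons]
    exact hsum.tsum_eq

section ExpectedDeviation

variable {m : ℕ}

lemma expect_abs_empMeas_sub_le (hμ : IsProb μ) (hm : 0 < m) (j : ℕ) :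
    expect μ m (fun x => |empMeas m x j - μ j|)
      ≤ 2 / √m * expect μ m (fun x => √(empMeas m x j)) := by
  have hm' : (0 : ℝ) < m := by exact_mod_cast hm
  have habs : expect μ m (fun x => |empMeas m x j - μ j|)
      = 1 / m * binomExpect (μ j) m (fun k => |k - m * μ j|) := by
    rw [← binomExpect.const_mul, ← expect_comp_sampleCount hμ]
    congr 1
    funext x
    rw [empMeas_eq_sampleCount_div, one_div_mul_eq_div, ← abs_of_pos hm', ← abs_div, abs_of_pos hm',
      sub_div, mul_div_cancel_left₀ _ hm'.ne']
  have hsqrt : expect μ m (fun x => √(empMeas m x j))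
      = 1 / √m * binomExpect (μ j) m (fun k => √k) := by
    rw [← binomExpect.const_mul, ← expect_comp_sampleCount hμ]
    congr 1
    funext x
    rw [empMeas_eq_sampleCount_div, sqrt_div (Nat.cast_nonneg _), one_div_mul_eq_div]
  rw [habs, hsqrt]
  calc 1 / m * binomExpect (μ j) m (fun k => |k - m * μ j|)
      ≤ 1 / m * (2 * binomExpect (μ j) m (fun k => √k)) :=
        mul_le_mul_of_nonneg_left (binomExpect.abs_sub_le (hμ.1 j) (hμ.le_one j) m) (by positivity)
    _ = 2 / √m * (1 / √m * binomExpect (μ j) m (fun k => √k)) := by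
        rw [← mul_assoc (2 / √m), div_mul_div_comm, mul_self_sqrt hm'.le]
        ring

lemma hasSum_expect_of_nonneg (hμ : IsProb μ) {g : (Fin m → ℕ) → ℕ → ℝ} {B : ℝ}
    (hg0 : ∀ x j, 0 ≤ g x j) (hg : ∀ x, Summable (g x)) (hB : ∀ x, ∑' j, g x j ≤ B) :
    HasSum (fun j => expect μ m (fun x => g x j)) (expect μ m (fun x => ∑' j, g x j)) := by
  have hgB : ∀ x j, |g x j| ≤ B := fun x j => by
    rw [abs_of_nonneg (hg0 x j)]
    exact ((hg x).le_tsum j fun k _ => hg0 x k).trans (hB x)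
  have hrow : ∀ x, Summable fun j => prodWeight μ m x * g x j := fun x => (hg x).mul_left _
  have hjoint : Summable fun p : (Fin m → ℕ) × ℕ => prodWeight μ m p.1 * g p.1 p.2 :=
    (summable_prod_of_nonneg fun p => mul_nonneg (prodWeight_nonneg hμ _) (hg0 _ _)).2
      ⟨hrow, by
        simpa only [tsum_mul_left] using summable_prodWeight_mul hμ (C := B) fun x => by
          rw [abs_of_nonneg (tsum_nonneg (hg0 x))]
          exact hB x⟩
  have h := hjoint.prod_symm.hasSum.prod_fiberwise fun j =>
    (summable_prodWeight_mul hμ fun x => hgB x j).hasSum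
  have hswap := (Equiv.prodComm ℕ (Fin m → ℕ)).tsum_eq fun p => prodWeight μ m p.1 * g p.1 p.2
  simp only [Equiv.prodComm_apply] at hswap
  rw [hswap, hjoint.tsum_prod' hrow] at h
  simpa only [expect_eq_tsum, tsum_mul_left] using h

lemma expect_tvDist_le_expect_Phi (hμ : IsProb μ) (hm : 0 < m) :
    expect μ m (fun x => tvDist (empMeas m x) μ) ≤ expect μ m (fun x => Phi m (empMeas m x)) := by
  have hTV := hasSum_expect_of_nonneg hμ (fun x j => abs_nonneg (empMeas m x j - μ j))
    (fun x => summable_abs_empMeas_sub x hμ hm) fun x => tsum_abs_empMeas_sub_le x hμ hm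
  have hPhi := hasSum_expect_of_nonneg hμ (fun x j => sqrt_nonneg (empMeas m x j))
    (fun x => summable_sqrt_empMeas x hm) fun x => tsum_sqrt_empMeas_le x hm
  simp only [tvDist, Phi, expect_const_mul]
  rw [← hTV.tsum_eq, ← hPhi.tsum_eq, ← tsum_mul_left, ← tsum_mul_left]
  refine (hTV.summable.mul_left _).tsum_le_tsum (fun j => ?_) (hPhi.summable.mul_left _)
  calc 1 / 2 * expect μ m (fun x => |empMeas m x j - μ j|)
      ≤ 1 / 2 * (2 / √m * expect μ m (fun x => √(empMeas m x j))) :=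
        mul_le_mul_of_nonneg_left (expect_abs_empMeas_sub_le hμ hm j) (by norm_num)
    _ = 1 / √m * expect μ m (fun x => √(empMeas m x j)) := by ring

lemma expect_tvDist_sub_Phi_nonpos (hμ : IsProb μ) (hm : 0 < m) :
    expect μ m (fun x => tvDist (empMeas m x) μ - Phi m (empMeas m x)) ≤ 0 := by
  rw [expect_sub hμ (fun x => abs_tvDist_empMeas_le_one x hμ hm)
    (fun x => abs_Phi_empMeas_le_one x hm)]
  linarith [expect_tvDist_le_expect_Phi hμ hm]

end ExpectedDeviation

end

/-- For every `m ∈ ℕ`, `δ ∈ (0,1)` and probability distribution `μ` on ℕ,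
with probability at least `1 - δ` over `X ~ μ^m`,
`‖μ̂_m - μ‖_TV ≤ Φ_m(μ̂_m) + 3 √(log(2/δ)/(2m))`. -/
theorem tv_le_Phi_high_prob (m : ℕ) (hm : 0 < m) (δ : ℝ) (hδ0 : 0 < δ) (hδ1 : δ < 1)
    (μ : ℕ → ℝ) (hμ : IsProb μ) :
    1 - δ ≤ probOf μ m {x | tvDist (empMeas m x) μ ≤
      Phi m (empMeas m x) + 3 * Real.sqrt (Real.log (2 / δ) / (2 * m))} := by
  set L := log (2 / δ)
  set ε := 3 * √(L / (2 * m))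
  set Z := fun x : Fin m → ℕ => tvDist (empMeas m x) μ - Phi m (empMeas m x)
  have hZ : HasBoundedDifferences Z (2 / m) := by
    simpa only [← add_div, one_add_one_eq_two] using
      (hasBoundedDifferences_tvDist_empMeas hμ hm).sub (hasBoundedDifferences_Phi_empMeas hm)
  have hbound : exp (-2 * ε ^ 2 / (m * (2 / m) ^ 2)) ≤ δ := by
    have hm' : (0 : ℝ) < m := by exact_mod_cast hm
    have hL : 0 ≤ L := log_nonneg (by rw [le_div_iff₀ hδ0]; linarith)
    have harg : -2 * ε ^ 2 / (m * (2 / m) ^ 2) = -(9 / 4 * L) := by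
      rw [mul_pow, sq_sqrt (by positivity)]
      field_simp
      ring
    calc exp (-2 * ε ^ 2 / (m * (2 / m) ^ 2)) ≤ exp (-L) := by rw [harg, exp_le_exp]; linarith
      _ = δ / 2 := by rw [exp_neg, exp_log (by positivity), inv_div]
      _ ≤ δ := by linarith
  have htail : {x | tvDist (empMeas m x) μ ≤ Phi m (empMeas m x) + ε}ᶜ
      ⊆ {x | expect μ m Z + ε ≤ Z x} := fun x hx => by
    simp only [Set.mem_compl_iff, Set.mem_ofPred_eq, not_le, Z] at hx ⊢
    linarith [expect_tvDist_sub_Phi_nonpos hμ hm]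
  linarith [probOf_add_probOf_compl hμ {x | tvDist (empMeas m x) μ ≤ Phi m (empMeas m x) + ε},
    probOf_mono hμ htail, hZ.probOf_le hμ (by positivity : 0 ≤ ε)]
end

section
/- There is a universal constant C > 0 such that for all Λ ≥ 2 and all ε, δ ∈ (0,1), the following holds: for every probability distribution μ on ℕ whose truncation satisfies ‖μ[2εδ/9]‖_{1/2} ≤ Λ, if (X_1,...,X_m) ~ μ^m and m ≥ (C/ε²)·max{Λ, log(1/δ)}, then ‖μ̂_m − μ‖_TV < ε holds with probability at least 1 − δ. -/
open scoped BigOperators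

noncomputable section MLEAux
namespace MLEAux

open Finset Function Real

variable {μ : ℕ → ℝ}

/-- product weight -/
def Wt (μ : ℕ → ℝ) (m : ℕ) (x : Fin m → ℕ) : ℝ := ∏ t, μ (x t)

lemma expect_def (m : ℕ) (g : (Fin m → ℕ) → ℝ) :
    expect μ m g = ∑' x, Wt μ m x * g x := rfl

lemma isProb_summable (h : IsProb μ) : Summable μ := by
  by_contra hns
  have h0 := tsum_eq_zero_of_not_summable hns
  rw [h.2] at h0
  exact one_ne_zero h0

lemma Wt_nonneg (h0 : ∀ i, 0 ≤ μ i) (m : ℕ) (x : Fin m → ℕ) : 0 ≤ Wt μ m x :=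
  Finset.prod_nonneg fun _ _ => h0 _

lemma Wt_cons (m : ℕ) (a : ℕ) (y : Fin m → ℕ) :
    Wt μ (m+1) (Fin.cons a y) = μ a * Wt μ m y := by
  simp [Wt, Fin.prod_univ_succ]

lemma summable_Wt (h : IsProb μ) : ∀ m, Summable (Wt μ m)
  | 0 => .of_finite
  | (m+1) => by
    have hm := summable_Wt h m
    have hprod : Summable (fun p : ℕ × (Fin m → ℕ) => μ p.1 * Wt μ m p.2) :=
      (isProb_summable h).mul_of_nonneg hm h.1 (Wt_nonneg h.1 m)
    rw [← (Fin.consEquiv (fun _ : Fin (m+1) => ℕ)).summable_iff (f := Wt μ (m+1))]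
    apply hprod.congr
    intro p
    obtain ⟨a, y⟩ := p
    show μ a * Wt μ m y = Wt μ (m+1) (Fin.cons a y)
    rw [Wt_cons]

lemma tsum_Wt_mul_succ (h : IsProb μ) (m : ℕ) (g : (Fin (m+1) → ℕ) → ℝ)
    (hg : Summable (fun x => Wt μ (m+1) x * g x)) :
    ∑' x, Wt μ (m+1) x * g x = ∑' a, μ a * ∑' y, Wt μ m y * g (Fin.cons a y) := by
  classical
  set e := Fin.consEquiv (fun _ : Fin (m+1) => ℕ) with he0
  have h1 : ∑' x, Wt μ (m+1) x * g x
      = ∑' p : ℕ × (Fin m → ℕ), Wt μ (m+1) (e p) * g (e p) :=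
    (Equiv.tsum_eq e _).symm
  have hF : Summable (fun p : ℕ × (Fin m → ℕ) => Wt μ (m+1) (e p) * g (e p)) :=
    (e.summable_iff (f := fun x => Wt μ (m+1) x * g x)).mpr hg
  rw [h1, Summable.tsum_prod' hF (fun a => hF.prod_factor a)]
  apply tsum_congr; intro a
  rw [← tsum_mul_left]
  apply tsum_congr; intro y
  show Wt μ (m+1) (Fin.cons a y) * g (Fin.cons a y) = _
  rw [Wt_cons, mul_assoc]

lemma tsum_Wt (h : IsProb μ) : ∀ m, ∑' x, Wt μ m x = 1
  | 0 => by
    rw [tsum_eq_single (fun i => i.elim0 : Fin 0 → ℕ)]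
    · simp [Wt]
    · intro b hb
      exact absurd (funext fun i => i.elim0) hb
  | (m+1) => by
    have hg : Summable (fun x : Fin (m+1) → ℕ => Wt μ (m+1) x * 1) := by
      simpa using summable_Wt h (m+1)
    have key := tsum_Wt_mul_succ h m (fun _ => 1) hg
    simp only [mul_one] at key
    calc ∑' x, Wt μ (m+1) x = ∑' a, μ a * ∑' y, Wt μ m y := by
          simpa using key
      _ = 1 := by rw [tsum_Wt h m]; simpa using h.2

lemma summable_Wt_mul (h : IsProb μ) (m : ℕ) {g : (Fin m → ℕ) → ℝ} {B : ℝ}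
    (hB : ∀ x, |g x| ≤ B) : Summable fun x => Wt μ m x * g x := by
  apply Summable.of_norm_bounded (g := fun x => B * Wt μ m x)
    ((summable_Wt h m).mul_left B)
  intro x
  rw [Real.norm_eq_abs, abs_mul, abs_of_nonneg (Wt_nonneg h.1 m x), mul_comm]
  exact mul_le_mul_of_nonneg_right (hB x) (Wt_nonneg h.1 m x)

lemma expect_nonneg (h : IsProb μ) (m : ℕ) {g : (Fin m → ℕ) → ℝ}
    (hg : ∀ x, 0 ≤ g x) : 0 ≤ expect μ m g :=
  tsum_nonneg fun x => mul_nonneg (Wt_nonneg h.1 m x) (hg x)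

lemma expect_const (h : IsProb μ) (m : ℕ) (c : ℝ) : expect μ m (fun _ => c) = c := by
  rw [expect_def, tsum_mul_right, tsum_Wt h m, one_mul]

lemma expect_mono (h : IsProb μ) (m : ℕ) {u v : (Fin m → ℕ) → ℝ}
    (hu : Summable fun x => Wt μ m x * u x) (hv : Summable fun x => Wt μ m x * v x)
    (huv : ∀ x, u x ≤ v x) : expect μ m u ≤ expect μ m v :=
  Summable.tsum_le_tsum (fun x => mul_le_mul_of_nonneg_left (huv x) (Wt_nonneg h.1 m x)) hu hv

lemma expect_add (m : ℕ) {u v : (Fin m → ℕ) → ℝ}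
    (hu : Summable fun x => Wt μ m x * u x) (hv : Summable fun x => Wt μ m x * v x) :
    expect μ m (fun x => u x + v x) = expect μ m u + expect μ m v := by
  rw [expect_def, expect_def, expect_def, ← Summable.tsum_add hu hv]
  apply tsum_congr; intro x; ring

lemma expect_sub (m : ℕ) {u v : (Fin m → ℕ) → ℝ}
    (hu : Summable fun x => Wt μ m x * u x) (hv : Summable fun x => Wt μ m x * v x) :
    expect μ m (fun x => u x - v x) = expect μ m u - expect μ m v := by
  rw [expect_def, expect_def, expect_def, ← Summable.tsum_sub hu hv]
  apply tsum_congr; intro x; ring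

lemma expect_smul (m : ℕ) (c : ℝ) (u : (Fin m → ℕ) → ℝ) :
    expect μ m (fun x => c * u x) = c * expect μ m u := by
  rw [expect_def, expect_def, ← tsum_mul_left]
  apply tsum_congr; intro x; ring

lemma expect_abs_le (h : IsProb μ) (m : ℕ) {g : (Fin m → ℕ) → ℝ} {B : ℝ}
    (hB : ∀ x, |g x| ≤ B) : |expect μ m g| ≤ B := by
  have hg : Summable fun x => Wt μ m x * g x := summable_Wt_mul h m hB
  have hc : ∀ c : ℝ, Summable fun x => Wt μ m x * (fun _ : Fin m → ℕ => c) x := by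
    intro c
    exact summable_Wt_mul h m (g := fun _ => c) (B := |c|) (fun x => le_refl _)
  rw [abs_le]
  constructor
  · rw [← expect_const h m (-B)]
    exact expect_mono h m (hc (-B)) hg (fun x => neg_le_of_abs_le (hB x))
  · rw [← expect_const h m B]
    exact expect_mono h m hg (hc B) (fun x => le_of_abs_le (hB x))

end MLEAux
namespace MLEAux

open Finset Function Real

variable {μ : ℕ → ℝ}

/-- Crude quadratic exponential bound from Taylor: for `|u| ≤ 1`, `exp u ≤ 1 + u + (3/4) u²`. -/
lemma exp_le_quad {u : ℝ} (hu : |u| ≤ 1) : Real.exp u ≤ 1 + u + (3/4) * u ^ 2 := by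
  have h := Real.exp_bound hu (n := 2) (by norm_num)
  have h2 : ∑ m ∈ Finset.range 2, u ^ m / (m.factorial : ℝ) = 1 + u := by
    simp [Finset.sum_range_succ]
  rw [h2] at h
  have h3 : |u| ^ 2 * ((2:ℕ).succ / ((2:ℕ).factorial * (2:ℕ) : ℝ)) = (3/4) * u ^ 2 := by
    rw [sq_abs]
    norm_num [Nat.factorial]
    ring
  rw [h3] at h
  linarith [le_of_abs_le h]

/-- Single-variable sub-Gaussian-type step. -/
lemma single_step (h : IsProb μ) {hh : ℕ → ℝ} {c lam : ℝ}
    (hlam : 0 ≤ lam) (hlc : lam * c ≤ 1)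
    (hosc : ∀ a b, |hh a - hh b| ≤ c) :
    ∑' a, μ a * Real.exp (lam * hh a)
      ≤ Real.exp (lam * (∑' a, μ a * hh a) + (3/4) * (lam ^ 2 * c ^ 2)) := by
  have hc0 : 0 ≤ c := by have := hosc 0 0; simpa using this
  have hhb : ∀ a, |hh a| ≤ |hh 0| + c := by
    intro a
    calc |hh a| ≤ |hh 0| + |hh a - hh 0| := by
          have := abs_sub_abs_le_abs_sub (hh a) (hh 0); linarith [abs_sub_abs_le_abs_sub (hh a) (hh 0)]
      _ ≤ |hh 0| + c := by linarith [hosc a 0]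
  have hμs := isProb_summable h
  -- summability facts
  have hsum_h : Summable fun a => μ a * hh a := by
    apply Summable.of_norm_bounded (g := fun a => (|hh 0| + c) * μ a) (hμs.mul_left _)
    intro a
    rw [Real.norm_eq_abs, abs_mul, abs_of_nonneg (h.1 a), mul_comm]
    exact mul_le_mul_of_nonneg_right (hhb a) (h.1 a)
  set hbar := ∑' a, μ a * hh a with hbar_def
  -- |hh a - hbar| ≤ c
  have hdev : ∀ a, |hh a - hbar| ≤ c := by
    intro a
    have h1 : hh a - hbar = ∑' b, μ b * (hh a - hh b) := by
      have hs2 : Summable fun b => μ b * (hh a - hh b) := by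
        apply Summable.of_norm_bounded (g := fun b => c * μ b) (hμs.mul_left _)
        intro b
        rw [Real.norm_eq_abs, abs_mul, abs_of_nonneg (h.1 b), mul_comm]
        exact mul_le_mul_of_nonneg_right (abs_sub_comm (hh a) (hh b) ▸ hosc a b) (h.1 b)
      have : (fun b => μ b * (hh a - hh b)) = fun b => (hh a) * μ b - μ b * hh b := by
        funext b; ring
      rw [this] at hs2 ⊢
      rw [Summable.tsum_sub (by exact (hμs.mul_left _)) hsum_h, tsum_mul_left, h.2, mul_one]
    rw [h1]
    have hs2 : Summable fun b => μ b * (hh a - hh b) := by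
      apply Summable.of_norm_bounded (g := fun b => c * μ b) (hμs.mul_left _)
      intro b
      rw [Real.norm_eq_abs, abs_mul, abs_of_nonneg (h.1 b), mul_comm]
      exact mul_le_mul_of_nonneg_right (abs_sub_comm (hh a) (hh b) ▸ hosc a b) (h.1 b)
    calc |∑' b, μ b * (hh a - hh b)| ≤ ∑' b, |μ b * (hh a - hh b)| := by
          simpa only [Real.norm_eq_abs] using norm_tsum_le_tsum_norm hs2.norm
      _ ≤ ∑' b, c * μ b := by
          apply Summable.tsum_le_tsum _ hs2.abs (hμs.mul_left _)
          intro b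
          rw [abs_mul, abs_of_nonneg (h.1 b), mul_comm]
          exact mul_le_mul_of_nonneg_right (abs_sub_comm (hh a) (hh b) ▸ hosc a b) (h.1 b)
      _ = c := by rw [tsum_mul_left, h.2, mul_one]
  -- pointwise bound
  have hpt : ∀ a, Real.exp (lam * hh a)
      ≤ Real.exp (lam * hbar) * (1 + lam * (hh a - hbar) + (3/4) * (lam ^ 2 * c ^ 2)) := by
    intro a
    have hu : |lam * (hh a - hbar)| ≤ 1 := by
      rw [abs_mul, abs_of_nonneg hlam]
      calc lam * |hh a - hbar| ≤ lam * c := mul_le_mul_of_nonneg_left (hdev a) hlam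
        _ ≤ 1 := hlc
    have hq := exp_le_quad hu
    have hsq : (lam * (hh a - hbar)) ^ 2 ≤ lam ^ 2 * c ^ 2 := by
      rw [mul_pow]
      apply mul_le_mul_of_nonneg_left _ (sq_nonneg lam)
      rw [← sq_abs]
      exact pow_le_pow_left₀ (abs_nonneg _) (hdev a) 2
    calc Real.exp (lam * hh a) = Real.exp (lam * hbar) * Real.exp (lam * (hh a - hbar)) := by
          rw [← Real.exp_add]; ring_nf
      _ ≤ Real.exp (lam * hbar) * (1 + lam * (hh a - hbar) + (3/4) * (lam ^ 2 * c ^ 2)) := by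
          apply mul_le_mul_of_nonneg_left _ (Real.exp_nonneg _)
          calc Real.exp (lam * (hh a - hbar)) ≤ 1 + lam * (hh a - hbar) + (3/4) * (lam * (hh a - hbar)) ^ 2 := hq
            _ ≤ 1 + lam * (hh a - hbar) + (3/4) * (lam ^ 2 * c ^ 2) := by linarith
  -- sum up
  have hse : Summable fun a => μ a * Real.exp (lam * hh a) := by
    apply Summable.of_norm_bounded
      (g := fun a => (Real.exp (lam * hbar) * (1 + lam * c + (3/4) * (lam ^ 2 * c ^ 2))) * μ a)
      (hμs.mul_left _)
    intro a
    rw [Real.norm_eq_abs, abs_mul, abs_of_nonneg (h.1 a), abs_of_nonneg (Real.exp_nonneg _), mul_comm]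
    apply mul_le_mul_of_nonneg_right _ (h.1 a)
    calc Real.exp (lam * hh a)
        ≤ Real.exp (lam * hbar) * (1 + lam * (hh a - hbar) + (3/4) * (lam ^ 2 * c ^ 2)) := hpt a
      _ ≤ Real.exp (lam * hbar) * (1 + lam * c + (3/4) * (lam ^ 2 * c ^ 2)) := by
          apply mul_le_mul_of_nonneg_left _ (Real.exp_nonneg _)
          have : lam * (hh a - hbar) ≤ lam * c := by
            calc lam * (hh a - hbar) ≤ lam * |hh a - hbar| :=
                  mul_le_mul_of_nonneg_left (le_abs_self _) hlam
              _ ≤ lam * c := mul_le_mul_of_nonneg_left (hdev a) hlam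
          linarith
  have hsum_dev : Summable fun a => μ a * (hh a - hbar) := by
    have : (fun a => μ a * (hh a - hbar)) = fun a => μ a * hh a - hbar * μ a := by
      funext a; ring
    rw [this]
    exact hsum_h.sub (hμs.mul_left _)
  have hzero : ∑' a, μ a * (hh a - hbar) = 0 := by
    have : (fun a => μ a * (hh a - hbar)) = fun a => μ a * hh a - hbar * μ a := by
      funext a; ring
    rw [this, Summable.tsum_sub hsum_h (hμs.mul_left _), tsum_mul_left, h.2, mul_one, hbar_def, sub_self]
  calc ∑' a, μ a * Real.exp (lam * hh a)
      ≤ ∑' a, μ a * (Real.exp (lam * hbar) * (1 + lam * (hh a - hbar) + (3/4) * (lam ^ 2 * c ^ 2))) := by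
        apply Summable.tsum_le_tsum (fun a => mul_le_mul_of_nonneg_left (hpt a) (h.1 a)) hse
        · have : (fun a => μ a * (Real.exp (lam * hbar) * (1 + lam * (hh a - hbar) + (3/4) * (lam ^ 2 * c ^ 2))))
              = fun a => (Real.exp (lam * hbar) * (1 + (3/4) * (lam ^ 2 * c ^ 2))) * μ a
                + (Real.exp (lam * hbar) * lam) * (μ a * (hh a - hbar)) := by
            funext a; ring
          rw [this]
          exact ((hμs.mul_left _).add (hsum_dev.mul_left _))
    _ = Real.exp (lam * hbar) * (1 + (3/4) * (lam ^ 2 * c ^ 2)) := by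
        have : (fun a => μ a * (Real.exp (lam * hbar) * (1 + lam * (hh a - hbar) + (3/4) * (lam ^ 2 * c ^ 2))))
            = fun a => (Real.exp (lam * hbar) * (1 + (3/4) * (lam ^ 2 * c ^ 2))) * μ a
              + (Real.exp (lam * hbar) * lam) * (μ a * (hh a - hbar)) := by
          funext a; ring
        rw [this, Summable.tsum_add ((hμs.mul_left _)) (hsum_dev.mul_left _), tsum_mul_left, tsum_mul_left,
          hzero, h.2]
        ring
    _ ≤ Real.exp (lam * hbar) * Real.exp ((3/4) * (lam ^ 2 * c ^ 2)) := by
        apply mul_le_mul_of_nonneg_left _ (Real.exp_nonneg _)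
        have := Real.add_one_le_exp ((3/4) * (lam ^ 2 * c ^ 2))
        linarith
    _ = Real.exp (lam * hbar + (3/4) * (lam ^ 2 * c ^ 2)) := by rw [← Real.exp_add]

end MLEAux
namespace MLEAux

open Finset Function Real

variable {μ : ℕ → ℝ}

lemma expect_zero (g : (Fin 0 → ℕ) → ℝ) : expect μ 0 g = g (fun i => i.elim0) := by
  rw [expect_def, tsum_eq_single (fun i => i.elim0 : Fin 0 → ℕ)]
  · simp [Wt]
  · intro b hb; exact absurd (funext fun i => i.elim0) hb

lemma expect_succ (h : IsProb μ) (m : ℕ) (g : (Fin (m+1) → ℕ) → ℝ)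
    (hg : Summable (fun x => Wt μ (m+1) x * g x)) :
    expect μ (m+1) g = ∑' a, μ a * expect μ m (fun y => g (Fin.cons a y)) :=
  tsum_Wt_mul_succ h m g hg

lemma mgf_bound (h : IsProb μ) {c lam : ℝ} (hlam : 0 ≤ lam) (hlc : lam * c ≤ 1) :
    ∀ (m : ℕ) (f : (Fin m → ℕ) → ℝ), (∀ x, |f x| ≤ 1) →
    (∀ (x : Fin m → ℕ) (t : Fin m) (n : ℕ), |f (Function.update x t n) - f x| ≤ c) →
    expect μ m (fun x => Real.exp (lam * f x))
      ≤ Real.exp (lam * expect μ m f + (3/4) * (lam ^ 2 * c ^ 2) * m)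
  | 0, f, hb1, hbd => by
    rw [expect_zero, expect_zero]
    simp
  | (m+1), f, hb1, hbd => by
    have hμs := isProb_summable h
    -- bound on exp values
    have hexpb : ∀ (k : ℕ) (g : (Fin k → ℕ) → ℝ), (∀ x, |g x| ≤ 1) →
        ∀ x, |Real.exp (lam * g x)| ≤ Real.exp lam := by
      intro k g hg x
      rw [abs_of_nonneg (Real.exp_nonneg _)]
      apply Real.exp_le_exp.mpr
      calc lam * g x ≤ lam * 1 := mul_le_mul_of_nonneg_left (le_of_abs_le (hg x)) hlam
        _ = lam := mul_one lam
    -- the conditional mean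
    set F : ℕ → (Fin m → ℕ) → ℝ := fun a y => f (Fin.cons a y) with hF
    have hFb : ∀ a y, |F a y| ≤ 1 := fun a y => hb1 _
    have hFbd : ∀ a (y : Fin m → ℕ) (t : Fin m) (n : ℕ),
        |F a (Function.update y t n) - F a y| ≤ c := by
      intro a y t n
      have : Fin.cons a (Function.update y t n) = Function.update (Fin.cons a y : Fin (m+1) → ℕ) t.succ n := by
        simp [Fin.cons_update]
      simpa only [hF, this] using hbd (Fin.cons a y) t.succ n
    set hcond : ℕ → ℝ := fun a => expect μ m (F a) with hcond_def
    have hcondb : ∀ a, |hcond a| ≤ 1 := fun a => expect_abs_le h m (hFb a)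
    have hosc : ∀ a b, |hcond a - hcond b| ≤ c := by
      intro a b
      have hsa : Summable fun y => Wt μ m y * F a y := summable_Wt_mul h m (hFb a)
      have hsb : Summable fun y => Wt μ m y * F b y := summable_Wt_mul h m (hFb b)
      have hsub : hcond a - hcond b = expect μ m (fun y => F a y - F b y) :=
        (expect_sub m hsa hsb).symm
      rw [hsub]
      apply expect_abs_le h m
      intro y
      have : (Fin.cons a y : Fin (m+1) → ℕ) = Function.update (Fin.cons b y : Fin (m+1) → ℕ) 0 a := by
        simp [Fin.update_cons_zero]
      simpa only [hF, this] using hbd (Fin.cons b y) 0 a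
    -- split expectation
    have hsum_exp : Summable fun x => Wt μ (m+1) x * Real.exp (lam * f x) :=
      summable_Wt_mul h (m+1) (hexpb (m+1) f hb1)
    rw [expect_succ h m _ hsum_exp]
    have IH : ∀ a, expect μ m (fun y => Real.exp (lam * F a y))
        ≤ Real.exp (lam * hcond a + (3/4) * (lam ^ 2 * c ^ 2) * m) := fun a =>
      mgf_bound h hlam hlc m (F a) (hFb a) (hFbd a)
    set K := Real.exp ((3/4) * (lam ^ 2 * c ^ 2) * m) with hK
    have hK0 : 0 ≤ K := Real.exp_nonneg _
    have step1 : ∑' a, μ a * expect μ m (fun y => Real.exp (lam * F a y))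
        ≤ ∑' a, μ a * (Real.exp (lam * hcond a) * K) := by
      apply Summable.tsum_le_tsum
      · intro a
        apply mul_le_mul_of_nonneg_left _ (h.1 a)
        calc expect μ m (fun y => Real.exp (lam * F a y))
            ≤ Real.exp (lam * hcond a + (3/4) * (lam ^ 2 * c ^ 2) * m) := IH a
          _ = Real.exp (lam * hcond a) * K := by rw [hK, ← Real.exp_add]
      · apply Summable.of_norm_bounded (g := fun a => Real.exp lam * μ a) (hμs.mul_left _)
        intro a
        rw [Real.norm_eq_abs, abs_mul, abs_of_nonneg (h.1 a), mul_comm]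
        apply mul_le_mul_of_nonneg_right _ (h.1 a)
        exact expect_abs_le h m (fun y => hexpb m (F a) (hFb a) y)
      · apply Summable.of_norm_bounded (g := fun a => (Real.exp lam * K) * μ a) (hμs.mul_left _)
        intro a
        rw [Real.norm_eq_abs, abs_mul, abs_of_nonneg (h.1 a), mul_comm]
        apply mul_le_mul_of_nonneg_right _ (h.1 a)
        rw [abs_mul, abs_of_nonneg hK0, abs_of_nonneg (Real.exp_nonneg _)]
        apply mul_le_mul_of_nonneg_right _ hK0
        apply Real.exp_le_exp.mpr
        calc lam * hcond a ≤ lam * 1 := mul_le_mul_of_nonneg_left (le_of_abs_le (hcondb a)) hlam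
          _ = lam := mul_one lam
    have step2 : ∑' a, μ a * (Real.exp (lam * hcond a) * K)
        = K * ∑' a, μ a * Real.exp (lam * hcond a) := by
      rw [← tsum_mul_left]
      apply tsum_congr; intro a; ring
    have step3 := single_step h hlam hlc hosc (hh := hcond)
    have hbar_eq : ∑' a, μ a * hcond a = expect μ (m+1) f := by
      rw [expect_succ h m f (summable_Wt_mul h (m+1) hb1)]
    calc ∑' a, μ a * expect μ m (fun y => Real.exp (lam * f (Fin.cons a y)))
        ≤ ∑' a, μ a * (Real.exp (lam * hcond a) * K) := step1
      _ = K * ∑' a, μ a * Real.exp (lam * hcond a) := step2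
      _ ≤ K * Real.exp (lam * (∑' a, μ a * hcond a) + (3/4) * (lam ^ 2 * c ^ 2)) :=
          mul_le_mul_of_nonneg_left step3 hK0
      _ = Real.exp (lam * expect μ (m+1) f + (3/4) * (lam ^ 2 * c ^ 2) * (m+1 : ℕ)) := by
          rw [hbar_eq, hK, ← Real.exp_add]
          congr 1
          push_cast
          ring

lemma probOf_eq (m : ℕ) (A : Set (Fin m → ℕ)) :
    probOf μ m A = ∑' x, Set.indicator A (Wt μ m) x := rfl

lemma indicator_Wt_nonneg (h0 : ∀ i, 0 ≤ μ i) (m : ℕ) (A : Set (Fin m → ℕ)) (x : Fin m → ℕ) :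
    0 ≤ Set.indicator A (Wt μ m) x :=
  Set.indicator_nonneg (fun y _ => Wt_nonneg h0 m y) x

lemma indicator_Wt_le (h0 : ∀ i, 0 ≤ μ i) (m : ℕ) (A : Set (Fin m → ℕ)) (x : Fin m → ℕ) :
    Set.indicator A (Wt μ m) x ≤ Wt μ m x :=
  Set.indicator_le_self' (fun y _ => Wt_nonneg h0 m y) x

lemma summable_indicator_Wt (h : IsProb μ) (m : ℕ) (A : Set (Fin m → ℕ)) :
    Summable (Set.indicator A (Wt μ m)) :=
  Summable.of_nonneg_of_le (indicator_Wt_nonneg h.1 m A) (indicator_Wt_le h.1 m A)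
    (summable_Wt h m)

lemma probOf_nonneg (h : IsProb μ) (m : ℕ) (A : Set (Fin m → ℕ)) : 0 ≤ probOf μ m A :=
  tsum_nonneg (indicator_Wt_nonneg h.1 m A)

lemma probOf_add_compl (h : IsProb μ) (m : ℕ) (A : Set (Fin m → ℕ)) :
    probOf μ m A + probOf μ m Aᶜ = 1 := by
  classical
  rw [probOf_eq, probOf_eq, ← Summable.tsum_add (summable_indicator_Wt h m A) (summable_indicator_Wt h m Aᶜ)]
  rw [← tsum_Wt h m]
  apply tsum_congr
  intro x
  by_cases hx : x ∈ A
  · rw [Set.indicator_of_mem hx, Set.indicator_of_notMem (by simpa using hx), add_zero]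
  · rw [Set.indicator_of_notMem hx, Set.indicator_of_mem (by simpa using hx), zero_add]

lemma probOf_mono (h : IsProb μ) (m : ℕ) {A B : Set (Fin m → ℕ)} (hAB : A ⊆ B) :
    probOf μ m A ≤ probOf μ m B := by
  rw [probOf_eq, probOf_eq]
  apply Summable.tsum_le_tsum _ (summable_indicator_Wt h m A) (summable_indicator_Wt h m B)
  intro x
  exact Set.indicator_le_indicator_of_subset hAB (fun y => Wt_nonneg h.1 m y) x

lemma chernoff (h : IsProb μ) (m : ℕ) (hm : 1 ≤ m) (f : (Fin m → ℕ) → ℝ)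
    (hb1 : ∀ x, |f x| ≤ 1)
    (hbd : ∀ (x : Fin m → ℕ) (t : Fin m) (n : ℕ),
      |f (Function.update x t n) - f x| ≤ 1 / (m : ℝ))
    {s : ℝ} (hs : 0 < s) (hs2 : s ≤ 3 / 2) :
    probOf μ m {x | expect μ m f + s ≤ f x} ≤ Real.exp (-(s ^ 2) * m / 3) := by
  have hm0 : (0 : ℝ) < m := by exact_mod_cast hm
  set c : ℝ := 1 / m with hc
  set lam : ℝ := 2 * s * m / 3 with hlam_def
  have hlam : 0 ≤ lam := by positivity
  have hlc : lam * c = 2 * s / 3 := by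
    rw [hlam_def, hc]; field_simp
  have hlc1 : lam * c ≤ 1 := by rw [hlc]; linarith
  set a : ℝ := expect μ m f + s with ha
  have key := mgf_bound h hlam hlc1 m f hb1 hbd
  -- pointwise Markov
  have hptb : ∀ x, |Real.exp (lam * (f x - a))| ≤ Real.exp (lam * (1 + |a|)) := by
    intro x
    rw [abs_of_nonneg (Real.exp_nonneg _)]
    apply Real.exp_le_exp.mpr
    apply mul_le_mul_of_nonneg_left _ hlam
    have := le_of_abs_le (hb1 x)
    have := neg_abs_le a
    linarith
  have hsumR : Summable fun x => Wt μ m x * Real.exp (lam * (f x - a)) :=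
    summable_Wt_mul h m hptb
  have step1 : probOf μ m {x | a ≤ f x} ≤ ∑' x, Wt μ m x * Real.exp (lam * (f x - a)) := by
    rw [probOf_eq]
    apply Summable.tsum_le_tsum _ (summable_indicator_Wt h m _) hsumR
    intro x
    by_cases hx : x ∈ {x | a ≤ f x}
    · rw [Set.indicator_of_mem hx]
      have h1 : (1 : ℝ) ≤ Real.exp (lam * (f x - a)) := by
        rw [show (1:ℝ) = Real.exp 0 by simp]
        apply Real.exp_le_exp.mpr
        have h2 : a ≤ f x := hx
        have h3 : 0 ≤ f x - a := by linarith
        exact mul_nonneg hlam h3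
      nlinarith [Wt_nonneg h.1 m x]
    · rw [Set.indicator_of_notMem hx]
      exact mul_nonneg (Wt_nonneg h.1 m x) (Real.exp_nonneg _)
  have step2 : ∑' x, Wt μ m x * Real.exp (lam * (f x - a))
      = Real.exp (-(lam * a)) * expect μ m (fun x => Real.exp (lam * f x)) := by
    rw [expect_def, ← tsum_mul_left]
    apply tsum_congr; intro x
    rw [mul_sub, Real.exp_sub, Real.exp_neg]
    ring
  have step3 : Real.exp (-(lam * a)) * expect μ m (fun x => Real.exp (lam * f x))
      ≤ Real.exp (-(lam * a)) * Real.exp (lam * expect μ m f + (3/4) * (lam ^ 2 * c ^ 2) * m) :=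
    mul_le_mul_of_nonneg_left key (Real.exp_nonneg _)
  have step4 : Real.exp (-(lam * a)) * Real.exp (lam * expect μ m f + (3/4) * (lam ^ 2 * c ^ 2) * m)
      = Real.exp (-(s ^ 2) * m / 3) := by
    rw [← Real.exp_add]
    congr 1
    rw [ha, hlam_def, hc]
    field_simp
    ring
  calc probOf μ m {x | expect μ m f + s ≤ f x} ≤ ∑' x, Wt μ m x * Real.exp (lam * (f x - a)) := step1
    _ = _ := step2
    _ ≤ _ := step3
    _ = _ := step4

end MLEAux
namespace MLEAux

open Finset Function Real

variable {μ : ℕ → ℝ}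

lemma abs_sum_comp_le {φ : ℕ → ℝ} {B : ℝ} (hB : ∀ n, |φ n| ≤ B) (m : ℕ) (x : Fin m → ℕ) :
    |∑ t, φ (x t)| ≤ m * B := by
  calc |∑ t, φ (x t)| ≤ ∑ t, |φ (x t)| := Finset.abs_sum_le_sum_abs _ _
    _ ≤ ∑ _t : Fin m, B := Finset.sum_le_sum (fun t _ => hB (x t))
    _ = m * B := by simp [mul_comm]

lemma summable_mul_of_bounded (h : IsProb μ) {φ : ℕ → ℝ} {B : ℝ} (hB : ∀ n, |φ n| ≤ B) :
    Summable fun n => μ n * φ n := by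
  apply Summable.of_norm_bounded (g := fun n => B * μ n) ((isProb_summable h).mul_left B)
  intro n
  rw [Real.norm_eq_abs, abs_mul, abs_of_nonneg (h.1 n), mul_comm]
  exact mul_le_mul_of_nonneg_right (hB n) (h.1 n)

lemma expect_sum_comp (h : IsProb μ) {φ : ℕ → ℝ} {B : ℝ} (hB : ∀ n, |φ n| ≤ B) :
    ∀ m, expect μ m (fun x => ∑ t, φ (x t)) = m * ∑' n, μ n * φ n
  | 0 => by rw [expect_zero]; simp
  | (m+1) => by
    have hμs := isProb_summable h
    have hsumg : Summable fun x : Fin (m+1) → ℕ => Wt μ (m+1) x * ∑ t, φ (x t) :=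
      summable_Wt_mul h (m+1) (abs_sum_comp_le hB (m+1))
    rw [expect_succ h m (fun x => ∑ t, φ (x t)) hsumg]
    have hin : ∀ a, expect μ m (fun y => ∑ t : Fin (m+1), φ ((Fin.cons a y : Fin (m+1) → ℕ) t))
        = φ a + m * ∑' n, μ n * φ n := by
      intro a
      have e1 : expect μ m (fun y => ∑ t : Fin (m+1), φ ((Fin.cons a y : Fin (m+1) → ℕ) t))
          = expect μ m (fun y => φ a + ∑ t : Fin m, φ (y t)) := by
        unfold _root_.expect
        refine tsum_congr fun y => ?_
        simp [Fin.sum_univ_succ]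
      rw [e1, expect_add m
        (summable_Wt_mul h m (g := fun _ => φ a) (B := |φ a|) (fun _ => le_refl _))
        (summable_Wt_mul h m (abs_sum_comp_le hB m)),
        expect_const h m, expect_sum_comp h hB m]
    calc ∑' a, μ a * expect μ m (fun y => ∑ t : Fin (m+1), φ ((Fin.cons a y : Fin (m+1) → ℕ) t))
        = ∑' a, (μ a * φ a + (m * ∑' n, μ n * φ n) * μ a) := by
          apply tsum_congr; intro a; rw [hin a]; ring
      _ = ((m + 1 : ℕ) : ℝ) * ∑' n, μ n * φ n := by
          rw [Summable.tsum_add (summable_mul_of_bounded h hB) (hμs.mul_left _),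
            tsum_mul_left, h.2, mul_one]
          push_cast; ring

lemma expect_sq_sum_comp (h : IsProb μ) {φ : ℕ → ℝ} {B : ℝ} (hB : ∀ n, |φ n| ≤ B) :
    ∀ m, expect μ m (fun x => (∑ t, φ (x t)) ^ 2)
      = m * (∑' n, μ n * φ n ^ 2) + ((m : ℝ) ^ 2 - m) * (∑' n, μ n * φ n) ^ 2
  | 0 => by rw [expect_zero]; simp
  | (m+1) => by
    have hμs := isProb_summable h
    have hBsq : ∀ n, |φ n ^ 2| ≤ B ^ 2 := fun n => by
      rw [abs_pow]
      exact pow_le_pow_left₀ (abs_nonneg _) (hB n) 2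
    have habs_sq : ∀ (k : ℕ) (x : Fin k → ℕ), |(∑ t, φ (x t)) ^ 2| ≤ ((k : ℝ) * B) ^ 2 := by
      intro k x
      rw [abs_pow]
      exact pow_le_pow_left₀ (abs_nonneg _) (abs_sum_comp_le hB k x) 2
    have hsumg : Summable fun x : Fin (m+1) → ℕ => Wt μ (m+1) x * (∑ t, φ (x t)) ^ 2 :=
      summable_Wt_mul h (m+1) (habs_sq (m+1))
    rw [expect_succ h m (fun x => (∑ t, φ (x t)) ^ 2) hsumg]
    set I := ∑' n, μ n * φ n with hI
    set I2 := ∑' n, μ n * φ n ^ 2 with hI2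
    have hin : ∀ a, expect μ m (fun y => (∑ t : Fin (m+1), φ ((Fin.cons a y : Fin (m+1) → ℕ) t)) ^ 2)
        = φ a ^ 2 + 2 * φ a * ((m : ℝ) * I) + ((m : ℝ) * I2 + ((m:ℝ) ^ 2 - m) * I ^ 2) := by
      intro a
      have e1 : expect μ m (fun y => (∑ t : Fin (m+1), φ ((Fin.cons a y : Fin (m+1) → ℕ) t)) ^ 2)
          = expect μ m (fun y =>
              (φ a ^ 2 + (2 * φ a) * (∑ t : Fin m, φ (y t)))
                + (∑ t : Fin m, φ (y t)) ^ 2) := by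
        unfold _root_.expect
        refine tsum_congr fun y => ?_
        simp only [Fin.sum_univ_succ, Fin.cons_zero, Fin.cons_succ]
        ring
      have hsA : Summable fun y : Fin m → ℕ => Wt μ m y * (fun _ : Fin m → ℕ => φ a ^ 2) y :=
        summable_Wt_mul h m (g := fun _ => φ a ^ 2) (B := |φ a ^ 2|) (fun _ => le_refl _)
      have hsB : Summable fun y : Fin m → ℕ =>
          Wt μ m y * ((2 * φ a) * (∑ t : Fin m, φ (y t))) :=
        summable_Wt_mul h m (B := |2 * φ a| * ((m : ℝ) * B)) (fun y => by
          rw [abs_mul]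
          exact mul_le_mul_of_nonneg_left (abs_sum_comp_le hB m y) (abs_nonneg _))
      have hsAB : Summable fun y : Fin m → ℕ =>
          Wt μ m y * (φ a ^ 2 + (2 * φ a) * (∑ t : Fin m, φ (y t))) := by
        have := hsA.add hsB
        apply this.congr
        intro y; ring
      have hsC : Summable fun y : Fin m → ℕ => Wt μ m y * (∑ t : Fin m, φ (y t)) ^ 2 :=
        summable_Wt_mul h m (habs_sq m)
      rw [e1, expect_add m hsAB hsC, expect_add m hsA hsB,
        expect_const h m, expect_smul, expect_sum_comp h hB m, expect_sq_sum_comp h hB m]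
    calc ∑' a, μ a * expect μ m (fun y => (∑ t : Fin (m+1), φ ((Fin.cons a y : Fin (m+1) → ℕ) t)) ^ 2)
        = ∑' a, (μ a * φ a ^ 2 + ((2 * ((m : ℝ) * I)) * (μ a * φ a)
            + ((m : ℝ) * I2 + ((m:ℝ) ^ 2 - m) * I ^ 2) * μ a)) := by
          apply tsum_congr; intro a; rw [hin a]; ring
      _ = I2 + (2 * ((m : ℝ) * I) * I + ((m : ℝ) * I2 + ((m:ℝ)^2 - m) * I^2) * 1) := by
          rw [Summable.tsum_add (summable_mul_of_bounded h hBsq)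
              (((summable_mul_of_bounded h hB).mul_left _).add (hμs.mul_left _)),
            Summable.tsum_add ((summable_mul_of_bounded h hB).mul_left _) (hμs.mul_left _),
            tsum_mul_left, tsum_mul_left, h.2, ← hI, ← hI2]
      _ = ((m + 1 : ℕ) : ℝ) * I2 + (((m + 1 : ℕ) : ℝ) ^ 2 - ((m + 1 : ℕ) : ℝ)) * I ^ 2 := by
          push_cast; ring

lemma empMeas_eq (m : ℕ) (x : Fin m → ℕ) (i : ℕ) :
    empMeas m x i = (∑ t, if x t = i then (1:ℝ) else 0) / m := by
  unfold empMeas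
  rw [Finset.card_filter]
  congr 1
  push_cast
  rfl

lemma empMeas_nonneg (m : ℕ) (x : Fin m → ℕ) (i : ℕ) : 0 ≤ empMeas m x i := by
  unfold empMeas
  positivity

lemma empMeas_le_one (m : ℕ) (x : Fin m → ℕ) (i : ℕ) : empMeas m x i ≤ 1 := by
  unfold empMeas
  rcases Nat.eq_zero_or_pos m with hm | hm
  · subst hm; simp
  · rw [div_le_one (by exact_mod_cast hm)]
    have h1 := Finset.card_filter_le (Finset.univ : Finset (Fin m)) (fun t => x t = i)
    have h2 : (Finset.univ : Finset (Fin m)).card = m := by simp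
    exact_mod_cast h1.trans_eq h2

lemma chi_abs_le (i : ℕ) : ∀ n, |(if n = i then (1:ℝ) else 0)| ≤ 1 := by
  intro n; split <;> simp

lemma tsum_mul_chi (i : ℕ) : (∑' n, μ n * (if n = i then (1:ℝ) else 0)) = μ i := by
  rw [tsum_eq_single i]
  · simp
  · intro b hb; simp [hb]

lemma tsum_mul_chi_sq (i : ℕ) : (∑' n, μ n * (if n = i then (1:ℝ) else 0) ^ 2) = μ i := by
  rw [tsum_eq_single i]
  · simp
  · intro b hb; simp [hb]

lemma expect_empMeas (h : IsProb μ) (m : ℕ) (hm : 1 ≤ m) (i : ℕ) :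
    expect μ m (fun x => empMeas m x i) = μ i := by
  have hm0 : (m : ℝ) ≠ 0 := Nat.cast_ne_zero.mpr (by omega)
  have e1 : (fun x : Fin m → ℕ => empMeas m x i)
      = fun x => (1 / (m:ℝ)) * ∑ t, (if x t = i then (1:ℝ) else 0) := by
    funext x; rw [empMeas_eq]; ring
  rw [e1, expect_smul, expect_sum_comp h (chi_abs_le i) m, tsum_mul_chi]
  field_simp

lemma expect_sq_dev (h : IsProb μ) (m : ℕ) (hm : 1 ≤ m) (i : ℕ) :
    expect μ m (fun x => (empMeas m x i - μ i) ^ 2) ≤ μ i / m := by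
  have hm0 : (m : ℝ) ≠ 0 := Nat.cast_ne_zero.mpr (by omega)
  have hmpos : (0 : ℝ) < m := by
    have : (1:ℝ) ≤ m := by exact_mod_cast hm
    linarith
  set p := μ i with hp
  have hp0 : 0 ≤ p := h.1 i
  set χ : ℕ → ℝ := fun n => if n = i then (1:ℝ) else 0 with hχ
  have hχb : ∀ n, |χ n| ≤ 1 := chi_abs_le i
  have hSb : ∀ x : Fin m → ℕ, |∑ t, χ (x t)| ≤ (m : ℝ) * 1 := abs_sum_comp_le hχb m
  have habs_sq : ∀ x : Fin m → ℕ, |(∑ t, χ (x t)) ^ 2| ≤ ((m:ℝ) * 1) ^ 2 := fun x => by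
    rw [abs_pow]
    exact pow_le_pow_left₀ (abs_nonneg _) (hSb x) 2
  have e1 : (fun x : Fin m → ℕ => (empMeas m x i - p) ^ 2)
      = fun x => (1 / (m:ℝ)^2) * (∑ t, χ (x t)) ^ 2
          + ((-(2 * p / m)) * (∑ t, χ (x t)) + p ^ 2) := by
    funext x
    rw [empMeas_eq]
    field_simp
    ring
  have hs1 : Summable fun x => Wt μ m x * ((1 / (m:ℝ)^2) * (∑ t, χ (x t)) ^ 2) :=
    summable_Wt_mul h m (B := (1/(m:ℝ)^2) * ((m:ℝ)*1)^2) (fun x => by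
      rw [abs_mul, abs_of_nonneg (by positivity : (0:ℝ) ≤ 1/(m:ℝ)^2)]
      exact mul_le_mul_of_nonneg_left (habs_sq x) (by positivity))
  have hs2a : Summable fun x => Wt μ m x * ((-(2 * p / m)) * (∑ t, χ (x t))) :=
    summable_Wt_mul h m (B := |(-(2 * p / m))| * ((m:ℝ)*1)) (fun x => by
      rw [abs_mul]
      exact mul_le_mul_of_nonneg_left (hSb x) (abs_nonneg _))
  have hs2b : Summable fun x => Wt μ m x * (fun _ : Fin m → ℕ => p ^ 2) x :=
    summable_Wt_mul h m (g := fun _ => p ^ 2) (B := |p ^ 2|) (fun _ => le_refl _)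
  have hs2 : Summable fun x => Wt μ m x * ((-(2 * p / m)) * (∑ t, χ (x t)) + p ^ 2) := by
    have := hs2a.add hs2b
    apply this.congr
    intro y; ring
  rw [e1, expect_add m hs1 hs2, expect_smul, expect_sq_sum_comp h hχb m,
    expect_add m hs2a hs2b, expect_smul, expect_sum_comp h hχb m, expect_const h m,
    tsum_mul_chi, tsum_mul_chi_sq]
  have : 1 / (m:ℝ)^2 * ((m:ℝ) * p + ((m:ℝ)^2 - m) * p ^ 2)
      + (-(2 * p / m) * ((m:ℝ) * p) + p ^ 2) = p / m - p ^ 2 / m := by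
    field_simp
    ring
  rw [this]
  have : 0 ≤ p ^ 2 / (m:ℝ) := by positivity
  linarith

lemma expect_abs_le_sqrt (h : IsProb μ) (m : ℕ) {g : (Fin m → ℕ) → ℝ} {B : ℝ}
    (hB : ∀ x, |g x| ≤ B) :
    expect μ m (fun x => |g x|) ≤ Real.sqrt (expect μ m (fun x => g x ^ 2)) := by
  have hB2 : ∀ x, |g x ^ 2| ≤ B ^ 2 := fun x => by
    rw [abs_pow]
    exact pow_le_pow_left₀ (abs_nonneg _) (hB x) 2
  have hs1 : Summable fun x => Wt μ m x * |g x| :=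
    summable_Wt_mul h m (g := fun x => |g x|) (B := B) (fun x => by rw [abs_abs]; exact hB x)
  have hs2 : Summable fun x => Wt μ m x * g x ^ 2 := summable_Wt_mul h m hB2
  have hE2 : 0 ≤ expect μ m (fun x => g x ^ 2) := expect_nonneg h m (fun x => sq_nonneg _)
  rw [expect_def]
  apply Summable.tsum_le_of_sum_le hs1
  intro s
  have key : (∑ x ∈ s, Wt μ m x * |g x|) ^ 2
      ≤ (∑ x ∈ s, Wt μ m x) * (∑ x ∈ s, Wt μ m x * g x ^ 2) := by
    have hcs := Finset.sum_mul_sq_le_sq_mul_sq s (fun x => Real.sqrt (Wt μ m x))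
      (fun x => Real.sqrt (Wt μ m x) * |g x|)
    calc (∑ x ∈ s, Wt μ m x * |g x|) ^ 2
        = (∑ x ∈ s, Real.sqrt (Wt μ m x) * (Real.sqrt (Wt μ m x) * |g x|)) ^ 2 := by
          congr 1
          apply Finset.sum_congr rfl
          intro x _
          rw [← mul_assoc, Real.mul_self_sqrt (Wt_nonneg h.1 m x)]
      _ ≤ (∑ x ∈ s, Real.sqrt (Wt μ m x) ^ 2) * (∑ x ∈ s, (Real.sqrt (Wt μ m x) * |g x|) ^ 2) := hcs
      _ = (∑ x ∈ s, Wt μ m x) * (∑ x ∈ s, Wt μ m x * g x ^ 2) := by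
          congr 1
          · apply Finset.sum_congr rfl; intro x _; rw [Real.sq_sqrt (Wt_nonneg h.1 m x)]
          · apply Finset.sum_congr rfl; intro x _
            rw [mul_pow, Real.sq_sqrt (Wt_nonneg h.1 m x), sq_abs]
  have h1 : (∑ x ∈ s, Wt μ m x) ≤ 1 := by
    rw [← tsum_Wt h m]
    exact Summable.sum_le_tsum s (fun x _ => Wt_nonneg h.1 m x) (summable_Wt h m)
  have h3 : 0 ≤ ∑ x ∈ s, Wt μ m x * |g x| :=
    Finset.sum_nonneg fun x _ => mul_nonneg (Wt_nonneg h.1 m x) (abs_nonneg _)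
  rw [Real.le_sqrt h3 hE2]
  calc (∑ x ∈ s, Wt μ m x * |g x|) ^ 2
      ≤ (∑ x ∈ s, Wt μ m x) * (∑ x ∈ s, Wt μ m x * g x ^ 2) := key
    _ ≤ 1 * expect μ m (fun x => g x ^ 2) := by
        apply mul_le_mul h1
          (Summable.sum_le_tsum s (fun x _ => mul_nonneg (Wt_nonneg h.1 m x) (sq_nonneg _)) hs2)
          (Finset.sum_nonneg fun x _ => mul_nonneg (Wt_nonneg h.1 m x) (sq_nonneg _))
          zero_le_one
    _ = expect μ m (fun x => g x ^ 2) := one_mul _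

lemma expect_abs_dev (h : IsProb μ) (m : ℕ) (hm : 1 ≤ m) (i : ℕ) :
    expect μ m (fun x => |empMeas m x i - μ i|)
      ≤ Real.sqrt (μ i) / Real.sqrt m := by
  have hp1 : μ i ≤ 1 := by
    rw [← h.2]
    exact Summable.le_tsum (isProb_summable h) i (fun j _ => h.1 j)
  have hb : ∀ x : Fin m → ℕ, |empMeas m x i - μ i| ≤ 2 := by
    intro x
    have h1 := empMeas_nonneg m x i
    have h2 := empMeas_le_one m x i
    have h3 := h.1 i
    rw [abs_le]
    constructor <;> linarith
  calc expect μ m (fun x => |empMeas m x i - μ i|)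
      ≤ Real.sqrt (expect μ m (fun x => (empMeas m x i - μ i) ^ 2)) :=
        expect_abs_le_sqrt h m hb
    _ ≤ Real.sqrt (μ i / m) := Real.sqrt_le_sqrt (expect_sq_dev h m hm i)
    _ = Real.sqrt (μ i) / Real.sqrt m := Real.sqrt_div (h.1 i) m

end MLEAux
namespace MLEAux

open Finset Function Real

variable {μ : ℕ → ℝ}

lemma summable_empMeas (m : ℕ) (x : Fin m → ℕ) : Summable (fun i => empMeas m x i) := by
  classical
  apply summable_of_ne_finset_zero (s := Finset.image x Finset.univ)
  intro i hi
  unfold empMeas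
  have : Finset.filter (fun t => x t = i) Finset.univ = ∅ := by
    apply Finset.filter_eq_empty_iff.mpr
    intro t _
    intro hxt
    exact hi (Finset.mem_image.mpr ⟨t, Finset.mem_univ t, hxt⟩)
  rw [this]
  simp

lemma tsum_empMeas (m : ℕ) (hm : 1 ≤ m) (x : Fin m → ℕ) : ∑' i, empMeas m x i = 1 := by
  classical
  have hm0 : (m:ℝ) ≠ 0 := Nat.cast_ne_zero.mpr (by omega)
  have e1 : ∀ i, empMeas m x i = ∑ t, (if x t = i then (1:ℝ) else 0) / m := by
    intro i; rw [empMeas_eq, Finset.sum_div]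
  rw [tsum_congr e1, Summable.tsum_finsetSum (f := fun t i => (if x t = i then (1:ℝ) else 0) / m)
    (fun t _ => by
      apply summable_of_ne_finset_zero (s := {x t})
      intro b hb
      show (if x t = b then (1:ℝ) else 0) / (m:ℝ) = 0
      rw [if_neg]
      · simp
      · intro hc; exact hb (by simp [hc]))]
  have e2 : ∀ t : Fin m, ∑' i, (if x t = i then (1:ℝ) else 0) / m = 1 / m := by
    intro t
    rw [tsum_eq_single (x t)]
    · simp
    · intro b hb
      rw [if_neg (fun hc => hb hc.symm)]
      simp
  rw [Finset.sum_congr rfl (fun t _ => e2 t)]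
  simp
  field_simp

lemma tv_nonneg (h : IsProb μ) (m : ℕ) (x : Fin m → ℕ) : 0 ≤ tvDist (empMeas m x) μ := by
  unfold tvDist
  have : 0 ≤ ∑' i, |empMeas m x i - μ i| := tsum_nonneg fun i => abs_nonneg _
  linarith

lemma summable_abs_dev (h : IsProb μ) (m : ℕ) (x : Fin m → ℕ) :
    Summable fun i => |empMeas m x i - μ i| :=
  ((summable_empMeas m x).sub (isProb_summable h)).abs

lemma tv_le_one (h : IsProb μ) (m : ℕ) (hm : 1 ≤ m) (x : Fin m → ℕ) :
    tvDist (empMeas m x) μ ≤ 1 := by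
  unfold tvDist
  have hb : ∑' i, |empMeas m x i - μ i| ≤ 2 := by
    calc ∑' i, |empMeas m x i - μ i| ≤ ∑' i, (empMeas m x i + μ i) := by
          apply Summable.tsum_le_tsum _ (summable_abs_dev h m x)
            ((summable_empMeas m x).add (isProb_summable h))
          intro i
          calc |empMeas m x i - μ i| ≤ |empMeas m x i| + |μ i| := abs_sub _ _
            _ = empMeas m x i + μ i := by
                rw [abs_of_nonneg (empMeas_nonneg m x i), abs_of_nonneg (h.1 i)]
      _ = 2 := by
          rw [Summable.tsum_add (summable_empMeas m x) (isProb_summable h), tsum_empMeas m hm x, h.2]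
          norm_num
  linarith

lemma emp_update_bound (m : ℕ) (hm : 1 ≤ m) (x : Fin m → ℕ) (t : Fin m) (n : ℕ) (i : ℕ) :
    |empMeas m (Function.update x t n) i - empMeas m x i|
      ≤ (if i = x t then (1:ℝ)/m else 0) + (if i = n then (1:ℝ)/m else 0) := by
  classical
  have hm0 : (0:ℝ) < m := by
    have : (1:ℝ) ≤ m := by exact_mod_cast hm
    linarith
  set A := Finset.filter (fun s => x s = i) Finset.univ with hA
  set A' := Finset.filter (fun s => Function.update x t n s = i) Finset.univ with hA'
  have fact1 : |empMeas m (Function.update x t n) i - empMeas m x i| ≤ 1/m := by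
    have hsub1 : A' ⊆ insert t A := by
      intro s hs
      rw [hA', Finset.mem_filter] at hs
      by_cases hst : s = t
      · exact Finset.mem_insert.mpr (Or.inl hst)
      · apply Finset.mem_insert.mpr; right
        rw [hA, Finset.mem_filter]
        refine ⟨Finset.mem_univ s, ?_⟩
        rw [← hs.2, Function.update_of_ne hst]
    have hsub2 : A ⊆ insert t A' := by
      intro s hs
      rw [hA, Finset.mem_filter] at hs
      by_cases hst : s = t
      · exact Finset.mem_insert.mpr (Or.inl hst)
      · apply Finset.mem_insert.mpr; right
        rw [hA', Finset.mem_filter]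
        refine ⟨Finset.mem_univ s, ?_⟩
        rw [Function.update_of_ne hst, hs.2]
    have hc1 : A'.card ≤ A.card + 1 :=
      le_trans (Finset.card_le_card hsub1) (Finset.card_insert_le t A)
    have hc2 : A.card ≤ A'.card + 1 :=
      le_trans (Finset.card_le_card hsub2) (Finset.card_insert_le t A')
    have he1 : empMeas m (Function.update x t n) i = (A'.card : ℝ) / m := rfl
    have he2 : empMeas m x i = (A.card : ℝ) / m := rfl
    have hr1 : (A'.card : ℝ) ≤ (A.card : ℝ) + 1 := by exact_mod_cast hc1
    have hr2 : (A.card : ℝ) ≤ (A'.card : ℝ) + 1 := by exact_mod_cast hc2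
    have habs : |(A'.card : ℝ) - (A.card : ℝ)| ≤ 1 := by
      rw [abs_le]; constructor <;> linarith
    rw [he1, he2, div_sub_div_same, abs_div, abs_of_pos hm0]
    exact (div_le_div_iff_of_pos_right hm0).mpr habs
  by_cases h1 : i = x t
  · rw [if_pos h1]
    have : (0:ℝ) ≤ (if i = n then (1:ℝ)/m else 0) := by positivity
    linarith [fact1]
  · by_cases h2 : i = n
    · rw [if_neg h1, if_pos h2]
      linarith [fact1]
    · -- filters agree
      have : A' = A := by
        apply Finset.filter_congr
        intro s _
        by_cases hst : s = t
        · subst hst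
          rw [Function.update_self]
          constructor
          · intro hc; exact absurd hc.symm h2
          · intro hc; exact absurd hc.symm h1
        · rw [Function.update_of_ne hst]
      have he : empMeas m (Function.update x t n) i = empMeas m x i := by
        unfold empMeas
        rw [show Finset.filter (fun s => Function.update x t n s = i) Finset.univ = A' from rfl,
          show Finset.filter (fun s => x s = i) Finset.univ = A from rfl, this]
      rw [he, if_neg h1, if_neg h2]
      simp [sub_self]

lemma tsum_emp_update (m : ℕ) (hm : 1 ≤ m) (x : Fin m → ℕ) (t : Fin m) (n : ℕ) :
    ∑' i, |empMeas m (Function.update x t n) i - empMeas m x i| ≤ 2 / m := by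
  classical
  have hs1 : Summable fun i : ℕ => (if i = x t then (1:ℝ)/m else 0) :=
    summable_of_ne_finset_zero (s := {x t}) (fun b hb => by
      rw [if_neg]; intro hc; exact hb (by simp [hc]))
  have hs2 : Summable fun i : ℕ => (if i = n then (1:ℝ)/m else 0) :=
    summable_of_ne_finset_zero (s := {n}) (fun b hb => by
      rw [if_neg]; intro hc; exact hb (by simp [hc]))
  have hsd : Summable fun i => |empMeas m (Function.update x t n) i - empMeas m x i| :=
    ((summable_empMeas m _).sub (summable_empMeas m x)).abs
  calc ∑' i, |empMeas m (Function.update x t n) i - empMeas m x i|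
      ≤ ∑' i, ((if i = x t then (1:ℝ)/m else 0) + (if i = n then (1:ℝ)/m else 0)) :=
        Summable.tsum_le_tsum (emp_update_bound m hm x t n) hsd (hs1.add hs2)
    _ = 1/m + 1/m := by rw [Summable.tsum_add hs1 hs2, tsum_ite_eq, tsum_ite_eq]
    _ = 2/m := by ring

lemma tv_dev_le (h : IsProb μ) (m : ℕ) {u v : ℕ → ℝ}
    (hu : Summable u) (hv : Summable v) :
    tvDist u μ - tvDist v μ ≤ (1/2) * ∑' i, |u i - v i| := by
  unfold tvDist
  have hμs := isProb_summable h
  have hsu : Summable fun i => |u i - μ i| := (hu.sub hμs).abs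
  have hsv : Summable fun i => |v i - μ i| := (hv.sub hμs).abs
  have hsd : Summable fun i => |u i - v i| := (hu.sub hv).abs
  have key : ∑' i, |u i - μ i| ≤ ∑' i, (|v i - μ i| + |u i - v i|) := by
    apply Summable.tsum_le_tsum _ hsu (hsv.add hsd)
    intro i
    calc |u i - μ i| = |(v i - μ i) + (u i - v i)| := by ring_nf
      _ ≤ |v i - μ i| + |u i - v i| := abs_add_le _ _
  rw [Summable.tsum_add hsv hsd] at key
  linarith

lemma tv_bd (h : IsProb μ) (m : ℕ) (hm : 1 ≤ m) :
    ∀ (x : Fin m → ℕ) (t : Fin m) (n : ℕ),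
      |tvDist (empMeas m (Function.update x t n)) μ - tvDist (empMeas m x) μ| ≤ 1 / m := by
  intro x t n
  have h1 := tv_dev_le h m (u := empMeas m (Function.update x t n)) (v := empMeas m x)
    (summable_empMeas m (Function.update x t n)) (summable_empMeas m x)
  have h2 := tv_dev_le h m (u := empMeas m x) (v := empMeas m (Function.update x t n))
    (summable_empMeas m x) (summable_empMeas m (Function.update x t n))
  have h3 := tsum_emp_update m hm x t n
  have h4 : ∑' i, |empMeas m x i - empMeas m (Function.update x t n) i| ≤ 2 / m := by
    rw [tsum_congr (fun i => abs_sub_comm (empMeas m x i) (empMeas m (Function.update x t n) i))]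
    exact h3
  have hg1 : tvDist (empMeas m (Function.update x t n)) μ - tvDist (empMeas m x) μ ≤ 1 / m := by
    calc tvDist (empMeas m (Function.update x t n)) μ - tvDist (empMeas m x) μ
        ≤ 1/2 * ∑' i, |empMeas m (Function.update x t n) i - empMeas m x i| := h1
      _ ≤ 1/2 * (2 / m) := by linarith
      _ = 1 / m := by ring
  have hg2 : tvDist (empMeas m x) μ - tvDist (empMeas m (Function.update x t n)) μ ≤ 1 / m := by
    calc tvDist (empMeas m x) μ - tvDist (empMeas m (Function.update x t n)) μ
        ≤ 1/2 * ∑' i, |empMeas m x i - empMeas m (Function.update x t n) i| := h2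
      _ ≤ 1/2 * (2 / m) := by linarith
      _ = 1 / m := by ring
  rw [abs_le]
  constructor <;> linarith

lemma tv_pointwise (h : IsProb μ) (m : ℕ) (hm : 1 ≤ m) (x : Fin m → ℕ) (hF : Finset ℕ) :
    tvDist (empMeas m x) μ ≤ (1/2) * ((∑ i ∈ hF, |empMeas m x i - μ i|)
      + ((∑' i, (if i ∈ hF then 0 else empMeas m x i))
          + ∑' i, (if i ∈ hF then (0:ℝ) else μ i))) := by
  classical
  have hμs := isProb_summable h
  have hs1 : Summable fun i => (if i ∈ hF then |empMeas m x i - μ i| else 0) :=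
    summable_of_ne_finset_zero (s := hF) (fun b hb => by rw [if_neg hb])
  have hs2 : Summable fun i => (if i ∈ hF then 0 else empMeas m x i) := by
    apply Summable.of_nonneg_of_le (f := fun i => empMeas m x i)
      (fun i => ?_) (fun i => ?_) (summable_empMeas m x)
    · by_cases hi : i ∈ hF
      · rw [if_pos hi]
      · rw [if_neg hi]; exact empMeas_nonneg m x i
    · by_cases hi : i ∈ hF
      · rw [if_pos hi]; exact empMeas_nonneg m x i
      · rw [if_neg hi]
  have hs3 : Summable fun i => (if i ∈ hF then (0:ℝ) else μ i) := by
    apply Summable.of_nonneg_of_le (f := μ)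
      (fun i => ?_) (fun i => ?_) hμs
    · by_cases hi : i ∈ hF
      · rw [if_pos hi]
      · rw [if_neg hi]; exact h.1 i
    · by_cases hi : i ∈ hF
      · rw [if_pos hi]; exact h.1 i
      · rw [if_neg hi]
  have key : ∑' i, |empMeas m x i - μ i|
      ≤ (∑ i ∈ hF, |empMeas m x i - μ i|)
        + ((∑' i, (if i ∈ hF then 0 else empMeas m x i))
            + ∑' i, (if i ∈ hF then (0:ℝ) else μ i)) := by
    have step : ∑' i, |empMeas m x i - μ i|
        ≤ ∑' i, ((if i ∈ hF then |empMeas m x i - μ i| else 0)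
            + ((if i ∈ hF then 0 else empMeas m x i) + (if i ∈ hF then (0:ℝ) else μ i))) := by
      apply Summable.tsum_le_tsum _ (summable_abs_dev h m x) (hs1.add (hs2.add hs3))
      intro i
      by_cases hi : i ∈ hF
      · simp only [hi, if_true]
        simp
      · simp only [hi, if_false]
        have h1 := empMeas_nonneg m x i
        have h2 := h.1 i
        calc |empMeas m x i - μ i| ≤ |empMeas m x i| + |μ i| := abs_sub _ _
          _ = 0 + (empMeas m x i + μ i) := by
              rw [abs_of_nonneg h1, abs_of_nonneg h2]; ring
    rw [Summable.tsum_add hs1 (hs2.add hs3), Summable.tsum_add hs2 hs3] at step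
    rw [tsum_eq_sum (s := hF) (f := fun i => if i ∈ hF then |empMeas m x i - μ i| else 0)
      (fun b hb => by
        show (if b ∈ hF then |empMeas m x b - μ b| else 0) = 0
        rw [if_neg hb])] at step
    calc ∑' i, |empMeas m x i - μ i|
        ≤ (∑ i ∈ hF, if i ∈ hF then |empMeas m x i - μ i| else 0)
          + ((∑' i, (if i ∈ hF then 0 else empMeas m x i))
              + ∑' i, (if i ∈ hF then (0:ℝ) else μ i)) := step
      _ = _ := by
          congr 1
          apply Finset.sum_congr rfl
          intro i hi
          rw [if_pos hi]
  unfold tvDist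
  linarith

end MLEAux
namespace MLEAux

open Finset Function Real

variable {μ : ℕ → ℝ}

lemma abs_dev_le_two (h : IsProb μ) (m : ℕ) (x : Fin m → ℕ) (i : ℕ) :
    |empMeas m x i - μ i| ≤ 2 := by
  have hp1 : μ i ≤ 1 := by
    rw [← h.2]
    exact Summable.le_tsum (isProb_summable h) i (fun j _ => h.1 j)
  have h1 := empMeas_nonneg m x i
  have h2 := empMeas_le_one m x i
  have h3 := h.1 i
  rw [abs_le]
  constructor <;> linarith

lemma expect_finset_sum (h : IsProb μ) (m : ℕ) (hF : Finset ℕ)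
    (g : ℕ → (Fin m → ℕ) → ℝ) (B : ℝ) (hB : ∀ i x, |g i x| ≤ B) :
    expect μ m (fun x => ∑ i ∈ hF, g i x) = ∑ i ∈ hF, expect μ m (g i) := by
  rw [expect_def]
  have e : ∀ x : Fin m → ℕ, Wt μ m x * ∑ i ∈ hF, g i x = ∑ i ∈ hF, Wt μ m x * g i x :=
    fun x => Finset.mul_sum _ _ _
  rw [tsum_congr e, Summable.tsum_finsetSum (fun i _ => summable_Wt_mul h m (fun x => hB i x))]
  rfl

lemma expect_tail_emp (h : IsProb μ) (m : ℕ) (hm : 1 ≤ m) (hF : Finset ℕ) :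
    expect μ m (fun x => ∑' i, (if i ∈ hF then 0 else empMeas m x i))
      = ∑' i, (if i ∈ hF then (0:ℝ) else μ i) := by
  classical
  have hm0 : (m:ℝ) ≠ 0 := Nat.cast_ne_zero.mpr (by omega)
  set ψ : ℕ → ℝ := fun j => if j ∈ hF then 0 else 1 with hψ
  have hψb : ∀ n, |ψ n| ≤ 1 := by
    intro n; rw [hψ]; by_cases hn : n ∈ hF <;> simp [hn]
  have hid : ∀ x : Fin m → ℕ, (∑' i, (if i ∈ hF then 0 else empMeas m x i))
      = (1/(m:ℝ)) * ∑ t, ψ (x t) := by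
    intro x
    have e1 : ∀ i, (if i ∈ hF then 0 else empMeas m x i)
        = ∑ t, (if i ∈ hF then 0 else if x t = i then (1:ℝ) else 0) / m := by
      intro i
      by_cases hi : i ∈ hF
      · simp [hi]
      · simp only [hi, if_false]
        rw [empMeas_eq, Finset.sum_div]
    rw [tsum_congr e1, Summable.tsum_finsetSum (f := fun t i => (if i ∈ hF then 0 else if x t = i then (1:ℝ) else 0) / m)
      (fun t _ => by
        apply summable_of_ne_finset_zero (s := {x t})
        intro b hb
        show (if b ∈ hF then 0 else if x t = b then (1:ℝ) else 0) / (m:ℝ) = 0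
        have : ¬ x t = b := fun hc => hb (by simp [hc])
        rw [if_neg this]
        simp)]
    have e2 : ∀ t : Fin m, (∑' i, (if i ∈ hF then 0 else if x t = i then (1:ℝ) else 0) / m)
        = ψ (x t) / m := by
      intro t
      rw [tsum_eq_single (x t)]
      · rw [hψ]
        by_cases hxt : x t ∈ hF <;> simp [hxt]
      · intro b hb
        have : ¬ x t = b := fun hc => hb hc.symm
        rw [if_neg this]
        simp
    rw [Finset.sum_congr rfl (fun t _ => e2 t), ← Finset.sum_div]
    ring
  have e3 : (fun x : Fin m → ℕ => ∑' i, (if i ∈ hF then 0 else empMeas m x i))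
      = fun x => (1/(m:ℝ)) * ∑ t, ψ (x t) := funext hid
  rw [e3, expect_smul, expect_sum_comp h hψb m]
  have e4 : (∑' n, μ n * ψ n) = ∑' i, (if i ∈ hF then (0:ℝ) else μ i) := by
    apply tsum_congr
    intro n
    rw [hψ]
    by_cases hn : n ∈ hF <;> simp [hn]
  rw [e4]
  field_simp

lemma mem_headFinset {pe : ℕ ≃ ℕ} {T i : ℕ} :
    i ∈ Finset.image (fun j => pe j) (Finset.range T) ↔ pe.symm i < T := by
  rw [Finset.mem_image]
  constructor
  · rintro ⟨j, hj, rfl⟩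
    simpa using Finset.mem_range.mp hj
  · intro hi
    exact ⟨pe.symm i, Finset.mem_range.mpr hi, by simp⟩

lemma truncT_spec (h : IsProb μ) (pe : ℕ ≃ ℕ) {η : ℝ} (hη : 0 < η) :
    ∑' i, μ (pe (i + truncT μ pe η)) < η := by
  have hne : {t : ℕ | ∑' i, μ (pe (i + t)) < η}.Nonempty := by
    have htend := tendsto_sum_nat_add (fun j => μ (pe j))
    have := htend.eventually_lt_const hη
    exact this.exists
  have := Nat.sInf_mem hne
  exact this

lemma sum_sqrt_head (pe : ℕ ≃ ℕ) (η : ℝ) :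
    ∑ i ∈ Finset.image (fun j => pe j) (Finset.range (truncT μ pe η)), Real.sqrt (μ i)
      = ∑' i, Real.sqrt (trunc μ pe η i) := by
  classical
  rw [tsum_eq_sum (s := Finset.image (fun j => pe j) (Finset.range (truncT μ pe η)))]
  · apply Finset.sum_congr rfl
    intro i hi
    unfold trunc
    rw [Set.indicator_of_mem]
    exact mem_headFinset.mp hi
  · intro i hi
    unfold trunc
    rw [Set.indicator_of_notMem, Real.sqrt_zero]
    intro hmem
    exact hi (mem_headFinset.mpr hmem)

lemma tail_mass_eq (h : IsProb μ) (pe : ℕ ≃ ℕ) (T : ℕ) :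
    ∑' i, (if i ∈ Finset.image (fun j => pe j) (Finset.range T) then (0:ℝ) else μ i)
      = ∑' j, μ (pe (j + T)) := by
  classical
  have hμs := isProb_summable h
  have hG : Summable (fun j : ℕ => if j < T then (0:ℝ) else μ (pe j)) := by
    apply Summable.of_nonneg_of_le (f := fun j => μ (pe j)) (fun j => ?_) (fun j => ?_)
      ((pe.summable_iff (f := μ)).mpr hμs)
    · by_cases hj : j < T
      · rw [if_pos hj]
      · rw [if_neg hj]; exact h.1 _
    · by_cases hj : j < T
      · rw [if_pos hj]; exact h.1 _
      · rw [if_neg hj]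
  have e0 : ∑' i, (if i ∈ Finset.image (fun j => pe j) (Finset.range T) then (0:ℝ) else μ i)
      = ∑' j, (if j < T then (0:ℝ) else μ (pe j)) := by
    rw [← Equiv.tsum_eq pe (fun i => if i ∈ Finset.image (fun j => pe j) (Finset.range T) then (0:ℝ) else μ i)]
    apply tsum_congr
    intro j
    have : (pe j ∈ Finset.image (fun j => pe j) (Finset.range T)) ↔ j < T := by
      rw [mem_headFinset]
      simp
    by_cases hj : j < T
    · rw [if_pos (this.mpr hj), if_pos hj]
    · rw [if_neg (fun hc => hj (this.mp hc)), if_neg hj]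
  rw [e0]
  have key := Summable.sum_add_tsum_nat_add (f := fun j => if j < T then (0:ℝ) else μ (pe j)) T hG
  have hzero : (∑ j ∈ Finset.range T, if j < T then (0:ℝ) else μ (pe j)) = 0 := by
    apply Finset.sum_eq_zero
    intro j hj
    rw [if_pos (Finset.mem_range.mp hj)]
  have e1 : ∀ j : ℕ, (if j + T < T then (0:ℝ) else μ (pe (j + T))) = μ (pe (j + T)) := by
    intro j
    rw [if_neg (by omega)]
  rw [hzero, zero_add] at key
  rw [← key]
  exact tsum_congr e1

end MLEAux

set_option maxHeartbeats 2000000 in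
/-- There is a universal constant `C > 0` such that for all `Λ ≥ 2` and
`ε, δ ∈ (0,1)`: for every probability `μ` on ℕ (with a non-increasing rearrangement `π`)
whose truncation satisfies `‖μ[2εδ/9]‖_{1/2} ≤ Λ`, if `m ≥ (C/ε²) max{Λ, log(1/δ)}`, then
`‖μ̂_m - μ‖_TV < ε` with probability at least `1 - δ`. -/
theorem mle_upper_minimax :
    ∃ C > (0 : ℝ), ∀ Λ : ℝ, 2 ≤ Λ → ∀ ε δ : ℝ, 0 < ε → ε < 1 → 0 < δ → δ < 1 →
      ∀ μ : ℕ → ℝ, IsProb μ → ∀ π : ℕ ≃ ℕ, Antitone (fun i => μ (π i)) →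
        hfnrm (trunc μ π (2 * ε * δ / 9)) ≤ Λ →
        ∀ m : ℕ, (C / ε ^ 2) * max Λ (Real.log (1 / δ)) ≤ (m : ℝ) →
          1 - δ ≤ probOf μ m {x | tvDist (empMeas m x) μ < ε} := by
  
  classical
  open MLEAux in
  refine ⟨2000, by norm_num, ?_⟩
  intro Λ hΛ ε δ hε0 hε1 hδ0 hδ1 μ h pe hanti hhf m hm
  set η : ℝ := 2 * ε * δ / 9 with hη_def
  have hη0 : 0 < η := by rw [hη_def]; positivity
  set M := max Λ (Real.log (1 / δ)) with hM_def
  have hM : 2 ≤ M := le_trans hΛ (le_max_left _ _)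
  have hε2 : (0:ℝ) < ε ^ 2 := by positivity
  have hεle : ε ^ 2 ≤ 1 := by nlinarith
  have hm4000 : (4000:ℝ) ≤ m := by
    have h2 : (2000:ℝ) ≤ 2000 / ε^2 := by
      rw [le_div_iff₀ hε2]; nlinarith
    have h3 : (2000 / ε^2) * 2 ≤ (2000/ε^2) * M :=
      mul_le_mul_of_nonneg_left hM (by positivity)
    nlinarith [hm]
  have hm1 : 1 ≤ m := by
    have h1 : (1:ℝ) ≤ m := by linarith
    exact_mod_cast h1
  have hmR : (0:ℝ) < m := by linarith
  have hΛ0 : (0:ℝ) < Λ := by linarith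
  have hmΛ : 2000 * Λ / ε ^ 2 ≤ m := by
    have h1 : 2000 / ε ^ 2 * Λ ≤ 2000 / ε^2 * M :=
      mul_le_mul_of_nonneg_left (le_max_left _ _) (by positivity)
    calc 2000 * Λ / ε^2 = 2000/ε^2 * Λ := by ring
      _ ≤ 2000/ε^2 * M := h1
      _ ≤ m := hm
  have hmlog : 2000 * Real.log (1/δ) ≤ ε ^ 2 * m := by
    have h1 : 2000 / ε ^ 2 * Real.log (1/δ) ≤ 2000/ε^2 * M :=
      mul_le_mul_of_nonneg_left (le_max_right _ _) (by positivity)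
    have h2 : 2000 / ε^2 * Real.log (1/δ) ≤ m := le_trans h1 hm
    calc 2000 * Real.log (1/δ) = (2000/ε^2 * Real.log (1/δ)) * ε^2 := by field_simp
      _ ≤ m * ε^2 := mul_le_mul_of_nonneg_right h2 (le_of_lt hε2)
      _ = ε^2 * m := by ring
  set T := truncT μ pe η with hT
  set hFs : Finset ℕ := Finset.image (fun j => pe j) (Finset.range T) with hFs_def
  set τ : ℝ := ∑' i, (if i ∈ hFs then (0:ℝ) else μ i) with hτ
  have hτη : τ < η := by
    rw [hτ, hFs_def, tail_mass_eq h pe T, hT]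
    exact truncT_spec h pe hη0
  have hτ0 : 0 ≤ τ := by
    rw [hτ]
    apply tsum_nonneg
    intro i
    by_cases hi : i ∈ hFs <;> simp [hi, h.1 i]
  have hηε : η ≤ 2*ε/9 := by rw [hη_def]; nlinarith
  have hτ1 : τ ≤ 1 := by nlinarith
  -- head bound
  have hsqrt_head : ∑ i ∈ hFs, Real.sqrt (μ i) ≤ Real.sqrt Λ := by
    rw [hFs_def, hT, sum_sqrt_head pe η]
    have h0 : 0 ≤ ∑' i, Real.sqrt (trunc μ pe η i) := tsum_nonneg fun i => Real.sqrt_nonneg _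
    rw [Real.le_sqrt h0 (le_of_lt hΛ0)]
    unfold hfnrm at hhf
    exact hhf
  set f : (Fin m → ℕ) → ℝ := fun x => tvDist (empMeas m x) μ with hf_def
  have hb1 : ∀ x, |f x| ≤ 1 := fun x => by
    rw [hf_def, abs_le]
    constructor
    · linarith [tv_nonneg h m x]
    · exact tv_le_one h m hm1 x
  have hbd : ∀ (x : Fin m → ℕ) (t : Fin m) (n : ℕ),
      |f (Function.update x t n) - f x| ≤ 1 / m := fun x t n => tv_bd h m hm1 x t n
  -- the dominating function u
  set u : (Fin m → ℕ) → ℝ := fun x => (1/2) * ((∑ i ∈ hFs, |empMeas m x i - μ i|)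
      + ((∑' i, (if i ∈ hFs then 0 else empMeas m x i)) + τ)) with hu_def
  have hTemp0 : ∀ x : Fin m → ℕ, 0 ≤ (∑' i, (if i ∈ hFs then 0 else empMeas m x i)) := by
    intro x
    apply tsum_nonneg
    intro i
    by_cases hi : i ∈ hFs <;> simp [hi, empMeas_nonneg m x i]
  have hTemp1 : ∀ x : Fin m → ℕ, (∑' i, (if i ∈ hFs then 0 else empMeas m x i)) ≤ 1 := by
    intro x
    have hs2 : Summable fun i => (if i ∈ hFs then 0 else empMeas m x i) := by
      apply Summable.of_nonneg_of_le (f := fun i => empMeas m x i)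
        (fun i => ?_) (fun i => ?_) (summable_empMeas m x)
      · by_cases hi : i ∈ hFs
        · rw [if_pos hi]
        · rw [if_neg hi]; exact empMeas_nonneg m x i
      · by_cases hi : i ∈ hFs
        · rw [if_pos hi]; exact empMeas_nonneg m x i
        · rw [if_neg hi]
    calc (∑' i, (if i ∈ hFs then 0 else empMeas m x i)) ≤ ∑' i, empMeas m x i := by
          apply Summable.tsum_le_tsum _ hs2 (summable_empMeas m x)
          intro i
          by_cases hi : i ∈ hFs
          · rw [if_pos hi]; exact empMeas_nonneg m x i
          · rw [if_neg hi]
      _ = 1 := tsum_empMeas m hm1 x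
  have hA0 : ∀ x : Fin m → ℕ, 0 ≤ (∑ i ∈ hFs, |empMeas m x i - μ i|) :=
    fun x => Finset.sum_nonneg fun i _ => abs_nonneg _
  have hA2 : ∀ x : Fin m → ℕ, (∑ i ∈ hFs, |empMeas m x i - μ i|) ≤ 2 * hFs.card := by
    intro x
    calc (∑ i ∈ hFs, |empMeas m x i - μ i|) ≤ ∑ _i ∈ hFs, 2 :=
        Finset.sum_le_sum (fun i _ => abs_dev_le_two h m x i)
      _ = 2 * hFs.card := by rw [Finset.sum_const]; simp [mul_comm]
  have hub : ∀ x, |u x| ≤ (hFs.card : ℝ) + 1 := by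
    intro x
    have h1 := hTemp0 x
    have h2 := hTemp1 x
    have h3 := hA0 x
    have h4 := hA2 x
    rw [hu_def, abs_of_nonneg (by linarith)]
    linarith
  have hsumWf : Summable fun x => Wt μ m x * f x := summable_Wt_mul h m hb1
  have hsumWu : Summable fun x => Wt μ m x * u x := summable_Wt_mul h m hub
  have hEfu : expect μ m f ≤ expect μ m u :=
    expect_mono h m hsumWf hsumWu (fun x => tv_pointwise h m hm1 x hFs)
  -- compute E u
  have hsA : Summable fun x => Wt μ m x * (∑ i ∈ hFs, |empMeas m x i - μ i|) :=
    summable_Wt_mul h m (B := 2 * hFs.card) (fun x => by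
      rw [abs_of_nonneg (hA0 x)]; exact hA2 x)
  have hsTemp : Summable fun x => Wt μ m x * (∑' i, (if i ∈ hFs then 0 else empMeas m x i)) :=
    summable_Wt_mul h m (B := 1) (fun x => by
      rw [abs_of_nonneg (hTemp0 x)]; exact hTemp1 x)
  have hsτ : Summable fun x => Wt μ m x * (fun _ : Fin m → ℕ => τ) x :=
    summable_Wt_mul h m (g := fun _ => τ) (B := |τ|) (fun _ => le_refl _)
  have hsTT : Summable fun x => Wt μ m x
      * ((∑' i, (if i ∈ hFs then 0 else empMeas m x i)) + τ) := by
    have := hsTemp.add hsτ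
    apply this.congr
    intro y; ring
  have hEu : expect μ m u = (1/2) * ((∑ i ∈ hFs, expect μ m (fun x => |empMeas m x i - μ i|))
      + (τ + τ)) := by
    rw [hu_def, expect_smul]
    congr 1
    rw [expect_add m hsA hsTT, expect_add m hsTemp hsτ,
      expect_finset_sum h m hFs (fun i x => |empMeas m x i - μ i|) 2
        (fun i x => by rw [abs_abs]; exact abs_dev_le_two h m x i),
      expect_tail_emp h m hm1 hFs, expect_const h m, ← hτ]
  have hEA : (∑ i ∈ hFs, expect μ m (fun x => |empMeas m x i - μ i|))
      ≤ Real.sqrt Λ / Real.sqrt m := by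
    have hsm : (0:ℝ) < Real.sqrt m := Real.sqrt_pos.mpr hmR
    calc ∑ i ∈ hFs, expect μ m (fun x => |empMeas m x i - μ i|)
        ≤ ∑ i ∈ hFs, Real.sqrt (μ i) / Real.sqrt m :=
          Finset.sum_le_sum (fun i _ => expect_abs_dev h m hm1 i)
      _ = (∑ i ∈ hFs, Real.sqrt (μ i)) / Real.sqrt m := by rw [Finset.sum_div]
      _ ≤ Real.sqrt Λ / Real.sqrt m := (div_le_div_iff_of_pos_right hsm).mpr hsqrt_head
  have hsqrtm : Real.sqrt Λ / Real.sqrt m ≤ ε / 44 := by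
    rw [← Real.sqrt_div (le_of_lt hΛ0) m]
    have h1 : Λ / m ≤ ε^2 / 2000 := by
      rw [div_le_div_iff₀ hmR (by norm_num)]
      have h2 := mul_le_mul_of_nonneg_right hmΛ (le_of_lt hε2)
      have he : 2000 * Λ / ε^2 * ε^2 = 2000 * Λ := by field_simp
      nlinarith
    calc Real.sqrt (Λ / m) ≤ Real.sqrt (ε^2/2000) := Real.sqrt_le_sqrt h1
      _ ≤ Real.sqrt ((ε/44)^2) := Real.sqrt_le_sqrt (by nlinarith)
      _ = ε/44 := Real.sqrt_sq (by positivity)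
  have hEf : expect μ m f ≤ ε / 4 := by
    have h1 := hEfu
    rw [hEu] at h1
    have h2 : τ < 2*ε/9 := by linarith
    have h3 : (∑ i ∈ hFs, expect μ m (fun x => |empMeas m x i - μ i|)) ≤ ε/44 :=
      le_trans hEA hsqrtm
    linarith
  -- Chernoff
  have hch := chernoff h m hm1 f hb1 hbd (s := ε/2) (by positivity) (by linarith)
  have hexp : Real.exp (-((ε/2) ^ 2) * m / 3) ≤ δ := by
    have hlog : 0 < Real.log (1/δ) := Real.log_pos (by rw [lt_div_iff₀ hδ0]; linarith)
    have h1 : Real.log (1/δ) ≤ (ε/2)^2 * m / 3 := by nlinarith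
    calc Real.exp (-((ε/2)^2) * m / 3) = Real.exp (-((ε/2)^2 * m / 3)) := by ring_nf
      _ ≤ Real.exp (-(Real.log (1/δ))) := Real.exp_le_exp.mpr (by linarith)
      _ = δ := by rw [Real.exp_neg, Real.exp_log (by positivity), one_div, inv_inv]
  set A : Set (Fin m → ℕ) := {x | tvDist (empMeas m x) μ < ε} with hA
  have hAc : Aᶜ = {x : Fin m → ℕ | ε ≤ tvDist (empMeas m x) μ} := by
    ext x
    simp [hA, not_lt]
  have hsub : {x : Fin m → ℕ | ε ≤ tvDist (empMeas m x) μ}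
      ⊆ {x : Fin m → ℕ | expect μ m f + ε/2 ≤ f x} := by
    intro x hx
    have hx' : ε ≤ f x := hx
    have h5 : expect μ m f + ε/2 ≤ ε := by linarith
    exact le_trans h5 hx'
  have hPc : probOf μ m Aᶜ ≤ δ := by
    rw [hAc]
    calc probOf μ m {x : Fin m → ℕ | ε ≤ tvDist (empMeas m x) μ}
        ≤ probOf μ m {x : Fin m → ℕ | expect μ m f + ε/2 ≤ f x} := probOf_mono h m hsub
      _ ≤ Real.exp (-((ε/2) ^ 2) * m / 3) := hch
      _ ≤ δ := hexp
  have hsum := probOf_add_compl h m A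
  have hge := probOf_nonneg h m A
  linarith
end MLEAux
end

section
/- For every m ∈ ℕ and every sample X = (X_1,...,X_m) ∈ ℕ^m with induced empirical measure μ̂_m, the empirical Rademacher complexity of the class of all boolean functions on ℕ satisfies (1/(2√2))·Φ_m(μ̂_m) ≤ R̂_m(X) ≤ (1/2)·Φ_m(μ̂_m). -/
open scoped BigOperators

lemma chooseRel (a : ℕ) :
    (a+1)^2 * Nat.choose (2*a+2) (a+1) = (2*a+2)*((2*a+1)*Nat.choose (2*a) a) := by
  have h1 : (2*a+1) * Nat.choose (2*a) a = Nat.choose (2*a+1) (a+1) * (a+1) := by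
    simpa using Nat.add_one_mul_choose_eq (2*a) a
  have h2 : (2*a+2) * Nat.choose (2*a+1) a = Nat.choose (2*a+2) (a+1) * (a+1) := by
    simpa [show 2*a+1+1 = 2*a+2 by ring] using Nat.add_one_mul_choose_eq (2*a+1) a
  have hs : Nat.choose (2*a+1) a = Nat.choose (2*a+1) (a+1) := by
    rw [← Nat.choose_symm (by omega : a ≤ 2*a+1)]
    congr 1; omega
  calc (a+1)^2 * Nat.choose (2*a+2) (a+1)
      = (a+1) * (Nat.choose (2*a+2) (a+1) * (a+1)) := by ring
    _ = (a+1) * ((2*a+2) * Nat.choose (2*a+1) a) := by rw [h2]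
    _ = (2*a+2) * (Nat.choose (2*a+1) (a+1) * (a+1)) := by rw [hs]; ring
    _ = (2*a+2) * ((2*a+1) * Nat.choose (2*a) a) := by rw [h1]

lemma bU (a : ℕ) : (2*a+1) * (Nat.choose (2*a) a)^2 ≤ 16^a := by
  induction a with
  | zero => simp
  | succ a ih =>
    have key : (a+1)^4 * ((2*(a+1)+1) * (Nat.choose (2*(a+1)) (a+1))^2)
        ≤ (a+1)^4 * 16^(a+1) := by
      have e : (a+1)^4 * ((2*(a+1)+1) * (Nat.choose (2*(a+1)) (a+1))^2)
          = (2*a+3) * ((2*a+2)*((2*a+1)*Nat.choose (2*a) a))^2 := by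
        have e2 : 2*(a+1) = 2*a+2 := by ring
        rw [e2, ← chooseRel a]; ring
      rw [e]
      have : (2*a+3) * ((2*a+2)*((2*a+1)*Nat.choose (2*a) a))^2
          = (2*a+3)*(2*a+2)^2*(2*a+1) * ((2*a+1) * (Nat.choose (2*a) a)^2) := by ring
      rw [this]
      calc (2*a+3)*(2*a+2)^2*(2*a+1) * ((2*a+1) * (Nat.choose (2*a) a)^2)
          ≤ (2*a+3)*(2*a+2)^2*(2*a+1) * 16^a := Nat.mul_le_mul_left _ ih
        _ ≤ (a+1)^4 * 16^(a+1) := by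
            have : (2*a+3)*(2*a+2)^2*(2*a+1) ≤ (a+1)^4 * 16 := by nlinarith
            calc (2*a+3)*(2*a+2)^2*(2*a+1) * 16^a ≤ ((a+1)^4*16) * 16^a :=
                  Nat.mul_le_mul_right _ this
              _ = (a+1)^4 * 16^(a+1) := by ring
    exact Nat.le_of_mul_le_mul_left key (by positivity)

lemma bL (a : ℕ) (ha : 1 ≤ a) : 16^a ≤ 4*a*(Nat.choose (2*a) a)^2 := by
  induction a with
  | zero => omega
  | succ a ih =>
    rcases Nat.eq_or_lt_of_le ha with h|h
    · simp [← h]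
    · have ha1 : 1 ≤ a := by omega
      have ih := ih ha1
      have key : (a+1)^4 * 16^(a+1) ≤ (a+1)^4 * (4*(a+1)*(Nat.choose (2*(a+1)) (a+1))^2) := by
        have e : (a+1)^4 * (4*(a+1)*(Nat.choose (2*(a+1)) (a+1))^2)
            = 4*(a+1) * ((2*a+2)*((2*a+1)*Nat.choose (2*a) a))^2 := by
          have e2 : 2*(a+1) = 2*a+2 := by ring
          rw [e2, ← chooseRel a]; ring
        rw [e]
        have e3 : 4*(a+1) * ((2*a+2)*((2*a+1)*Nat.choose (2*a) a))^2
            = ((a+1)*(2*a+2)^2*(2*a+1)^2) * (4*(Nat.choose (2*a) a)^2) := by ring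
        rw [e3]
        have h16 : a * 16^(a+1) ≤ a * (16 * (4*a*(Nat.choose (2*a) a)^2)) := by
          have : 16^(a+1) = 16 * 16^a := by ring
          rw [this]
          exact Nat.mul_le_mul_left _ (Nat.mul_le_mul_left _ ih)
        -- need: (a+1)^4 * 16^(a+1) ≤ ((a+1)*(2a+2)^2*(2a+1)^2) * (4 C^2)
        -- from ih: 16^a ≤ 4a C^2.
        have step : a * ((a+1)^4 * 16^(a+1)) ≤ a * (((a+1)*(2*a+2)^2*(2*a+1)^2) * (4*(Nat.choose (2*a) a)^2)) := by
          calc a * ((a+1)^4 * 16^(a+1)) = (a+1)^4 * 16 * (a * 16^a) := by ring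
            _ ≤ (a+1)^4 * 16 * (a * (4*a*(Nat.choose (2*a) a)^2)) := by
                exact Nat.mul_le_mul_left _ (Nat.mul_le_mul_left _ ih)
            _ ≤ a * (((a+1)*(2*a+2)^2*(2*a+1)^2) * (4*(Nat.choose (2*a) a)^2)) := by
                have c1 : a * ((a+1)^4 * 16 * (4*a)) ≤ a * ((a+1)*(2*a+2)^2*(2*a+1)^2*4) := by nlinarith
                calc (a+1)^4 * 16 * (a * (4*a*(Nat.choose (2*a) a)^2))
                    = (a * ((a+1)^4 * 16 * (4*a))) * (Nat.choose (2*a) a)^2 := by ring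
                  _ ≤ (a * ((a+1)*(2*a+2)^2*(2*a+1)^2*4)) * (Nat.choose (2*a) a)^2 :=
                      Nat.mul_le_mul_right _ c1
                  _ = a * (((a+1)*(2*a+2)^2*(2*a+1)^2) * (4*(Nat.choose (2*a) a)^2)) := by ring
        exact Nat.le_of_mul_le_mul_left step (by omega)
      exact Nat.le_of_mul_le_mul_left key (by positivity)

open Finset

def NN (c : ℕ) : ℕ := ∑ k ∈ range (c+1), Nat.choose c k * (2*k - c)

lemma pascalSumN (c : ℕ) (F : ℕ → ℕ) :
    ∑ k ∈ range (c+2), Nat.choose (c+1) k * F k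
      = ∑ k ∈ range (c+1), Nat.choose c k * (F (k+1) + F k) := by
  have key : ∑ k ∈ range (c+1), Nat.choose c (k+1) * F (k+1) + F 0
      = ∑ k ∈ range (c+1), Nat.choose c k * F k := by
    rw [Finset.sum_range_succ (fun k => Nat.choose c (k+1) * F (k+1))]
    rw [Finset.sum_range_succ' (fun k => Nat.choose c k * F k)]
    simp [Nat.choose_succ_self]
  rw [Finset.sum_range_succ' (fun k => Nat.choose (c+1) k * F k)]
  simp only [Nat.choose_succ_succ, Nat.choose_zero_right, add_mul, mul_add, one_mul]
  rw [Finset.sum_add_distrib, Finset.sum_add_distrib]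
  simp only [Nat.succ_eq_add_one]
  omega

lemma Nrec (c : ℕ) : NN (c+1) = 2 * NN c + (if c % 2 = 0 then Nat.choose c (c/2) else 0) := by
  unfold NN
  rw [show c+1+1 = c+2 from rfl, pascalSumN c (fun k => 2*k - (c+1))]
  have term : ∀ k ∈ range (c+1), Nat.choose c k * ((2*(k+1) - (c+1)) + (2*k - (c+1)))
      = 2 * (Nat.choose c k * (2*k - c)) + (if k = c/2 ∧ c % 2 = 0 then Nat.choose c (c/2) else 0) := by
    intro k hk
    by_cases h : k = c/2 ∧ c % 2 = 0
    · obtain ⟨h1, h2⟩ := h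
      subst h1
      simp only [h2, and_true, if_pos rfl, if_true]
      have : (2*(c/2+1) - (c+1)) + (2*(c/2) - (c+1)) = 1 ∧ 2*(c/2) - c = 0 := by omega
      rw [this.1, this.2]; ring
    · simp only [h, if_false]
      have : (2*(k+1) - (c+1)) + (2*k - (c+1)) = 2 * (2*k - c) := by omega
      rw [this]; ring
  rw [Finset.sum_congr rfl term, Finset.sum_add_distrib, ← Finset.mul_sum]
  congr 1
  by_cases hc : c % 2 = 0
  · simp only [hc, and_true, if_pos]
    rw [Finset.sum_ite_eq' (range (c+1)) (c/2) (fun _ => Nat.choose c (c/2))]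
    simp [Finset.mem_range, Nat.lt_succ_iff, Nat.div_le_self]
  · simp [hc]

lemma Nval : ∀ a : ℕ, NN (2*a) = a * Nat.choose (2*a) a ∧ NN (2*a+1) = (2*a+1) * Nat.choose (2*a) a := by
  intro a
  induction a with
  | zero =>
    constructor
    · simp [NN]
    · rw [show 2*0+1 = 0+1 from rfl, Nrec 0]; simp [NN]
  | succ a ih =>
    have heven : NN (2*(a+1)) = (a+1) * Nat.choose (2*(a+1)) (a+1) := by
      have e : 2*(a+1) = (2*a+1)+1 := by ring
      rw [e, Nrec (2*a+1)]
      rw [if_neg (by omega), ih.2]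
      -- 2*(2a+1)*C(2a,a) = (a+1)*C(2a+2,a+1)
      have hr : (a+1) * ((a+1) * Nat.choose (2*a+2) (a+1)) = (a+1) * (2 * ((2*a+1) * Nat.choose (2*a) a)) := by
        calc (a+1) * ((a+1) * Nat.choose (2*a+2) (a+1)) = (a+1)^2 * Nat.choose (2*a+2) (a+1) := by ring
          _ = (2*a+2)*((2*a+1)*Nat.choose (2*a) a) := chooseRel a
          _ = (a+1) * (2 * ((2*a+1) * Nat.choose (2*a) a)) := by ring
      have := Nat.eq_of_mul_eq_mul_left (by omega : 0 < a+1) hr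
      rw [show 2*a+1+1 = 2*a+2 from rfl, this]
      omega
    refine ⟨heven, ?_⟩
    rw [Nrec (2*(a+1)), heven]
    rw [if_pos (by omega : (2*(a+1)) % 2 = 0), show (2*(a+1))/2 = a+1 from by omega]
    ring

lemma Nupper (c : ℕ) : 4 * (NN c)^2 ≤ 4^c * c := by
  rcases Nat.even_or_odd c with ⟨a, ha⟩ | ⟨a, ha⟩
  · subst ha
    rw [show a+a = 2*a from by ring, (Nval a).1]
    have h16 : (4:ℕ)^(2*a) = 16^a := by rw [pow_mul]; norm_num
    rw [h16]
    have := bU a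
    calc 4 * (a * Nat.choose (2*a) a)^2 = 2*a * (2*a * (Nat.choose (2*a) a)^2) := by ring
      _ ≤ 2*a * ((2*a+1) * (Nat.choose (2*a) a)^2) := by
          exact Nat.mul_le_mul_left _ (Nat.mul_le_mul_right _ (by omega))
      _ ≤ 2*a * 16^a := Nat.mul_le_mul_left _ this
      _ = 16^a * (2*a) := by ring
  · subst ha
    rw [(Nval a).2]
    have h16 : (4:ℕ)^(2*a+1) = 4 * 16^a := by rw [pow_succ, pow_mul]; norm_num; ring
    rw [h16]
    have := bU a
    calc 4 * ((2*a+1) * Nat.choose (2*a) a)^2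
        = 4*(2*a+1) * ((2*a+1) * (Nat.choose (2*a) a)^2) := by ring
      _ ≤ 4*(2*a+1) * 16^a := Nat.mul_le_mul_left _ this
      _ = 4 * 16^a * (2*a+1) := by ring

lemma Nlower (c : ℕ) (hc : 1 ≤ c) : 4^c * c ≤ 8 * (NN c)^2 := by
  rcases Nat.even_or_odd c with ⟨a, ha⟩ | ⟨a, ha⟩
  · subst ha
    have ha1 : 1 ≤ a := by omega
    rw [show a+a = 2*a from by ring, (Nval a).1]
    have h16 : (4:ℕ)^(2*a) = 16^a := by rw [pow_mul]; norm_num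
    rw [h16]
    have := bL a ha1
    calc 16^a * (2*a) = 2*a * 16^a := by ring
      _ ≤ 2*a * (4*a*(Nat.choose (2*a) a)^2) := Nat.mul_le_mul_left _ this
      _ = 8 * (a * Nat.choose (2*a) a)^2 := by ring
  · subst ha
    rw [(Nval a).2]
    have h16 : (4:ℕ)^(2*a+1) = 4 * 16^a := by rw [pow_succ, pow_mul]; norm_num; ring
    rw [h16]
    -- need 4*16^a*(2a+1) ≤ 8*((2a+1)C)^2 ⟺ 16^a ≤ 2(2a+1)C²
    have key : 16^a ≤ 2*(2*a+1)*(Nat.choose (2*a) a)^2 := by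
      rcases Nat.eq_zero_or_pos a with h0 | hpos
      · subst h0; simp
      · have := bL a hpos
        calc 16^a ≤ 4*a*(Nat.choose (2*a) a)^2 := this
          _ ≤ 2*(2*a+1)*(Nat.choose (2*a) a)^2 := by
            exact Nat.mul_le_mul_right _ (by omega)
    calc 4 * 16^a * (2*a+1)
        ≤ 4 * (2*(2*a+1)*(Nat.choose (2*a) a)^2) * (2*a+1) := by
          exact Nat.mul_le_mul_right _ (Nat.mul_le_mul_left _ key)
      _ = 8 * ((2*a+1) * Nat.choose (2*a) a)^2 := by ring

open Finset


lemma pascalSumR (c : ℕ) (F : ℕ → ℝ) :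
    ∑ k ∈ range (c+2), (Nat.choose (c+1) k : ℝ) * F k
      = ∑ k ∈ range (c+1), (Nat.choose c k : ℝ) * (F (k+1) + F k) := by
  have key : ∑ k ∈ range (c+1), (Nat.choose c (k+1) : ℝ) * F (k+1) + F 0
      = ∑ k ∈ range (c+1), (Nat.choose c k : ℝ) * F k := by
    rw [Finset.sum_range_succ (fun k => (Nat.choose c (k+1) : ℝ) * F (k+1))]
    rw [Finset.sum_range_succ' (fun k => (Nat.choose c k : ℝ) * F k)]
    simp [Nat.choose_succ_self]
  rw [Finset.sum_range_succ' (fun k => (Nat.choose (c+1) k : ℝ) * F k)]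
  simp only [Nat.choose_succ_succ, Nat.choose_zero_right, Nat.cast_add, add_mul, mul_add,
    Nat.cast_one, one_mul]
  rw [Finset.sum_add_distrib, Finset.sum_add_distrib]
  simp only [Nat.succ_eq_add_one]
  linarith [key]

lemma sum_bool_card {ι : Type*} [Fintype ι] [DecidableEq ι] (B : Finset ι) (F : ℕ → ℝ) :
    ∑ σ : ι → Bool, F ((B.filter (fun t => σ t = true)).card)
      = (2:ℝ)^(Fintype.card ι) / 2^(B.card) *
          ∑ k ∈ range (B.card+1), (Nat.choose B.card k : ℝ) * F k := by
  induction B using Finset.induction generalizing F with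
  | empty =>
    simp [Finset.card_univ, Fintype.card_fun]
  | @insert a B ha ih =>
    have hcard : (insert a B).card = B.card + 1 := Finset.card_insert_of_notMem ha
    have gdef : ∀ (σ : ι → Bool), ((insert a B).filter (fun t => σ t = true)).card
        = (B.filter (fun t => σ t = true)).card + (if σ a = true then 1 else 0) := by
      intro σ
      rw [Finset.filter_insert]
      by_cases h : σ a = true
      · rw [if_pos h, if_pos h, Finset.card_insert_of_notMem (fun hmem => ha (Finset.mem_of_mem_filter a hmem))]
      · rw [if_neg h, if_neg h, add_zero]
    have flipinv : Function.Involutive (fun σ : ι → Bool => Function.update σ a (!σ a)) := by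
      intro σ
      ext t
      by_cases h : t = a
      · subst h; simp
      · simp [Function.update_of_ne h]
    let e : (ι → Bool) ≃ (ι → Bool) := flipinv.toPerm _
    have hea : ∀ σ : ι → Bool, (e σ) a = !σ a := by
      intro σ; simp [e, Function.Involutive.toPerm]
    have hKe : ∀ σ : ι → Bool, (B.filter (fun t => (e σ) t = true)).card
        = (B.filter (fun t => σ t = true)).card := by
      intro σ
      apply congrArg Finset.card
      apply Finset.filter_congr
      intro t ht
      have hta : t ≠ a := fun h => ha (h ▸ ht)
      simp [e, Function.Involutive.toPerm, Function.update_of_ne hta]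
    have hsum2 : (2:ℝ) * ∑ σ : ι → Bool, F (((insert a B).filter (fun t => σ t = true)).card)
        = ∑ σ : ι → Bool, (F ((B.filter (fun t => σ t = true)).card + 1)
            + F ((B.filter (fun t => σ t = true)).card)) := by
      have h1 : ∑ σ : ι → Bool, F (((insert a B).filter (fun t => σ t = true)).card)
          = ∑ σ : ι → Bool, F (((insert a B).filter (fun t => (e σ) t = true)).card) :=
        (Equiv.sum_comp e fun σ => F (((insert a B).filter (fun t => σ t = true)).card)).symm
      rw [two_mul]
      nth_rewrite 2 [h1]
      rw [← Finset.sum_add_distrib]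
      apply Finset.sum_congr rfl
      intro σ _
      rw [gdef σ, gdef (e σ), hKe σ, hea σ]
      cases h : σ a <;> simp [h] <;> ring
    have ihstep := ih (fun k => F (k+1) + F k)
    have final : (2:ℝ) * ∑ σ : ι → Bool, F (((insert a B).filter (fun t => σ t = true)).card)
        = 2 * ((2:ℝ)^(Fintype.card ι) / 2^((insert a B).card) *
            ∑ k ∈ range ((insert a B).card+1), (Nat.choose (insert a B).card k : ℝ) * F k) := by
      rw [hsum2, ihstep, hcard]
      rw [show B.card + 1 + 1 = B.card + 2 from rfl, pascalSumR B.card F]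
      rw [pow_succ]
      field_simp
    linarith [final]

section main
variable (m : ℕ) (x : Fin m → ℕ)

-- value of a Rademacher sum over a block
lemma sval_eq (B : Finset (Fin m)) (σ : Fin m → Bool) :
    ∑ t ∈ B, (if σ t then (1:ℝ) else -1)
      = 2*((B.filter (fun t => σ t = true)).card : ℝ) - B.card := by
  have : ∀ t, (if σ t then (1:ℝ) else -1) = 2*(if σ t = true then (1:ℝ) else 0) - 1 := by
    intro t; cases h : σ t <;> simp [h] <;> norm_num
  rw [Finset.sum_congr rfl (fun t _ => this t), Finset.sum_sub_distrib, ← Finset.mul_sum,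
    Finset.sum_boole, Finset.sum_const]
  simp [mul_comm]

lemma ssup_eq (σ : Fin m → Bool) :
    sSup (Set.range (fun f : ℕ → Bool =>
      (1 / (m : ℝ)) * ∑ t, (if σ t then (1 : ℝ) else -1) * (if f (x t) then (1 : ℝ) else 0)))
      = (1 / (m : ℝ)) * ∑ j ∈ Finset.image x Finset.univ,
          max (∑ t ∈ Finset.univ.filter (fun t => x t = j), (if σ t then (1:ℝ) else -1)) 0 := by
  set J := Finset.image x Finset.univ with hJ
  set S : ℕ → ℝ := fun j => ∑ t ∈ Finset.univ.filter (fun t => x t = j), (if σ t then (1:ℝ) else -1) with hS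
  have decomp : ∀ f : ℕ → Bool,
      ∑ t, (if σ t then (1 : ℝ) else -1) * (if f (x t) then (1 : ℝ) else 0)
        = ∑ j ∈ J, (if f j then (1:ℝ) else 0) * S j := by
    intro f
    rw [← Finset.sum_fiberwise_of_maps_to (fun t _ => Finset.mem_image_of_mem x (Finset.mem_univ t))
        (fun t => (if σ t then (1 : ℝ) else -1) * (if f (x t) then (1 : ℝ) else 0))]
    apply Finset.sum_congr rfl
    intro j _
    show _ = (if f j then (1:ℝ) else 0) * ∑ t ∈ Finset.univ.filter (fun t => x t = j), (if σ t then (1:ℝ) else -1)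
    rw [Finset.mul_sum]
    apply Finset.sum_congr rfl
    intro t ht
    rw [(Finset.mem_filter.mp ht).2]
    ring
  have bound : ∀ f : ℕ → Bool,
      (1 / (m : ℝ)) * ∑ t, (if σ t then (1 : ℝ) else -1) * (if f (x t) then (1 : ℝ) else 0)
        ≤ (1 / (m : ℝ)) * ∑ j ∈ J, max (S j) 0 := by
    intro f
    rw [decomp f]
    apply mul_le_mul_of_nonneg_left _ (by positivity)
    apply Finset.sum_le_sum
    intro j _
    cases h : f j
    · simpa [h] using le_max_right (S j) 0
    · simpa [h] using le_max_left (S j) 0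
  have attained : ∃ f : ℕ → Bool,
      (1 / (m : ℝ)) * ∑ t, (if σ t then (1 : ℝ) else -1) * (if f (x t) then (1 : ℝ) else 0)
        = (1 / (m : ℝ)) * ∑ j ∈ J, max (S j) 0 := by
    refine ⟨fun j => decide (0 < S j), ?_⟩
    rw [decomp (fun j => decide (0 < S j))]
    congr 1
    apply Finset.sum_congr rfl
    intro j _
    by_cases h : 0 < S j
    · simp [h, max_eq_left h.le]
    · simp [h, max_eq_right (le_of_not_gt h)]
  apply le_antisymm
  · apply csSup_le (Set.range_nonempty _)
    rintro _ ⟨f, rfl⟩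
    exact bound f
  · obtain ⟨f, hf⟩ := attained
    rw [← hf]
    refine le_csSup ⟨(1 / (m : ℝ)) * ∑ j ∈ J, max (S j) 0, ?_⟩ ⟨f, rfl⟩
    rintro _ ⟨g, rfl⟩
    exact bound g

end main

lemma atom_sum (B : Finset (Fin m)) :
    ∑ σ : Fin m → Bool, max (∑ t ∈ B, (if σ t then (1:ℝ) else -1)) 0
      = (2:ℝ)^m / 2^(B.card) * (NN B.card : ℝ) := by
  have step1 : ∀ σ : Fin m → Bool, max (∑ t ∈ B, (if σ t then (1:ℝ) else -1)) 0
      = (fun k : ℕ => max (2*(k:ℝ) - B.card) 0) ((B.filter (fun t => σ t = true)).card) := by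
    intro σ
    rw [sval_eq m B σ]
  rw [Finset.sum_congr rfl (fun σ _ => step1 σ),
    sum_bool_card B (fun k => max (2*(k:ℝ) - B.card) 0), Fintype.card_fin]
  congr 1
  have cast_term : ∀ k, k ∈ range (B.card+1) → (Nat.choose B.card k : ℝ) * max (2*(k:ℝ) - B.card) 0
      = ((Nat.choose B.card k * (2*k - B.card) : ℕ) : ℝ) := by
    intro k _
    rcases le_total B.card (2*k) with h | h
    · have hr : (B.card:ℝ) ≤ 2*(k:ℝ) := by exact_mod_cast h
      rw [max_eq_left (by linarith)]
      push_cast [h]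
      ring
    · rw [max_eq_right (by exact_mod_cast sub_nonpos.mpr (show 2*(k:ℝ) ≤ B.card by exact_mod_cast h)),
        show 2*k - B.card = 0 from by omega]
      simp
  rw [Finset.sum_congr rfl cast_term, NN]
  exact (Nat.cast_sum _ _).symm

lemma empRad_eq :
    empRad m x = (1 / (m:ℝ)) * ∑ j ∈ Finset.image x Finset.univ,
      ((NN ((Finset.univ.filter (fun t => x t = j)).card) : ℝ)
        / 2^((Finset.univ.filter (fun t => x t = j)).card)) := by
  unfold empRad
  rw [Finset.sum_congr rfl (fun σ _ => ssup_eq m x σ)]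
  rw [← Finset.mul_sum, Finset.sum_comm]
  rw [Finset.mul_sum, Finset.mul_sum, Finset.mul_sum]
  apply Finset.sum_congr rfl
  intro j _
  rw [atom_sum (Finset.univ.filter (fun t => x t = j))]
  have h2m : (2:ℝ)^m ≠ 0 := by positivity
  field_simp

lemma Phi_eq (m : ℕ) (hm : 0 < m) (x : Fin m → ℕ) :
    Phi m (empMeas m x) = (1 / (m:ℝ)) * ∑ j ∈ Finset.image x Finset.univ,
      Real.sqrt ((Finset.univ.filter (fun t => x t = j)).card) := by
  unfold Phi
  have hzero : ∀ j, j ∉ Finset.image x Finset.univ → Real.sqrt (empMeas m x j) = 0 := by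
    intro j hj
    have : Finset.univ.filter (fun t => x t = j) = ∅ := by
      rw [Finset.filter_eq_empty_iff]
      intro t _
      exact fun h => hj (h ▸ Finset.mem_image_of_mem x (Finset.mem_univ t))
    rw [empMeas, this]
    simp
  rw [tsum_eq_sum hzero]
  have hm' : (0:ℝ) < m := by exact_mod_cast hm
  have hsm : Real.sqrt m > 0 := Real.sqrt_pos.mpr hm'
  have key : ∀ j ∈ Finset.image x Finset.univ, Real.sqrt (empMeas m x j)
      = Real.sqrt ((Finset.univ.filter (fun t => x t = j)).card) / Real.sqrt m := by
    intro j _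
    rw [empMeas, Real.sqrt_div (by positivity)]
  rw [Finset.sum_congr rfl key, ← Finset.sum_div]
  rw [one_div, one_div, inv_mul_eq_div, div_div, Real.mul_self_sqrt hm'.le, div_eq_inv_mul]

lemma term_bounds (c : ℕ) (hc : 1 ≤ c) :
    Real.sqrt c / (2 * Real.sqrt 2) ≤ (NN c : ℝ) / 2^c
      ∧ (NN c : ℝ) / 2^c ≤ Real.sqrt c / 2 := by
  have h4 : (4:ℝ) * (NN c : ℝ)^2 ≤ 4^c * c := by exact_mod_cast Nupper c
  have h8 : (4:ℝ)^c * c ≤ 8 * (NN c : ℝ)^2 := by exact_mod_cast Nlower c hc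
  have e1 : ((2:ℝ)^c)^2 = 4^c := by
    rw [← pow_mul, mul_comm, pow_mul]; norm_num
  have hc0 : (0:ℝ) ≤ c := Nat.cast_nonneg c
  have hp : (0:ℝ) < 2^c := by positivity
  have hsc : Real.sqrt c ^ 2 = (c:ℝ) := Real.sq_sqrt hc0
  have hs2 : Real.sqrt 2 ^ 2 = (2:ℝ) := Real.sq_sqrt (by norm_num)
  have hs2p : (0:ℝ) < Real.sqrt 2 := Real.sqrt_pos.mpr (by norm_num)
  constructor
  · have hb : (0:ℝ) ≤ Real.sqrt c / (2 * Real.sqrt 2) := by positivity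
    have ha : (0:ℝ) ≤ (NN c : ℝ) / 2^c := by positivity
    have hsq : (Real.sqrt c / (2 * Real.sqrt 2))^2 ≤ ((NN c : ℝ) / 2^c)^2 := by
      rw [div_pow, div_pow, mul_pow, hsc, hs2, e1]
      rw [div_le_div_iff₀ (by norm_num) (by positivity)]
      nlinarith [h8]
    calc Real.sqrt c / (2 * Real.sqrt 2)
        = Real.sqrt ((Real.sqrt c / (2 * Real.sqrt 2))^2) := (Real.sqrt_sq hb).symm
      _ ≤ Real.sqrt (((NN c : ℝ) / 2^c)^2) := Real.sqrt_le_sqrt hsq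
      _ = (NN c : ℝ) / 2^c := Real.sqrt_sq ha
  · have ha : (0:ℝ) ≤ (NN c : ℝ) / 2^c := by positivity
    have hb : (0:ℝ) ≤ Real.sqrt c / 2 := by positivity
    have hsq : ((NN c : ℝ) / 2^c)^2 ≤ (Real.sqrt c / 2)^2 := by
      rw [div_pow, div_pow, hsc, e1]
      rw [div_le_div_iff₀ (by positivity) (by norm_num)]
      nlinarith [h4]
    calc (NN c : ℝ) / 2^c = Real.sqrt (((NN c : ℝ) / 2^c)^2) := (Real.sqrt_sq ha).symm
      _ ≤ Real.sqrt ((Real.sqrt c / 2)^2) := Real.sqrt_le_sqrt hsq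
      _ = Real.sqrt c / 2 := Real.sqrt_sq hb


/-- For every `m ∈ ℕ` and sample `x ∈ ℕ^m`,
`(1/(2√2)) Φ_m(μ̂_m) ≤ R̂_m(x) ≤ (1/2) Φ_m(μ̂_m)`. -/
theorem empRad_Phi_bounds (m : ℕ) (hm : 0 < m) (x : Fin m → ℕ) :
    (1 / (2 * Real.sqrt 2)) * Phi m (empMeas m x) ≤ empRad m x ∧
      empRad m x ≤ (1 / 2) * Phi m (empMeas m x) := by
  have hER := empRad_eq (m := m) (x := x)
  have hPhi := Phi_eq m hm x
  have hm' : (0:ℝ) < m := by exact_mod_cast hm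
  have hcpos : ∀ j ∈ Finset.image x Finset.univ,
      1 ≤ (Finset.univ.filter (fun t => x t = j)).card := by
    intro j hj
    obtain ⟨t, _, ht⟩ := Finset.mem_image.mp hj
    exact Finset.card_pos.mpr ⟨t, Finset.mem_filter.mpr ⟨Finset.mem_univ t, ht⟩⟩
  constructor
  · rw [hER, hPhi]
    have hsum : ∑ j ∈ Finset.image x Finset.univ,
        Real.sqrt ((Finset.univ.filter (fun t => x t = j)).card) / (2 * Real.sqrt 2)
        ≤ ∑ j ∈ Finset.image x Finset.univ,
          ((NN ((Finset.univ.filter (fun t => x t = j)).card) : ℝ)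
            / 2^((Finset.univ.filter (fun t => x t = j)).card)) := by
      apply Finset.sum_le_sum
      intro j hj
      exact (term_bounds _ (hcpos j hj)).1
    calc (1 / (2 * Real.sqrt 2)) * ((1 / (m:ℝ)) * ∑ j ∈ Finset.image x Finset.univ,
          Real.sqrt ((Finset.univ.filter (fun t => x t = j)).card))
        = (1 / (m:ℝ)) * ∑ j ∈ Finset.image x Finset.univ,
            Real.sqrt ((Finset.univ.filter (fun t => x t = j)).card) / (2 * Real.sqrt 2) := by
          rw [← Finset.sum_div]; ring
      _ ≤ _ := mul_le_mul_of_nonneg_left hsum (by positivity)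
  · rw [hER, hPhi]
    have hsum : ∑ j ∈ Finset.image x Finset.univ,
        ((NN ((Finset.univ.filter (fun t => x t = j)).card) : ℝ)
          / 2^((Finset.univ.filter (fun t => x t = j)).card))
        ≤ ∑ j ∈ Finset.image x Finset.univ,
          Real.sqrt ((Finset.univ.filter (fun t => x t = j)).card) / 2 := by
      apply Finset.sum_le_sum
      intro j hj
      exact (term_bounds _ (hcpos j hj)).2
    calc (1 / (m:ℝ)) * ∑ j ∈ Finset.image x Finset.univ,
          ((NN ((Finset.univ.filter (fun t => x t = j)).card) : ℝ)
            / 2^((Finset.univ.filter (fun t => x t = j)).card))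
        ≤ (1 / (m:ℝ)) * ∑ j ∈ Finset.image x Finset.univ,
            Real.sqrt ((Finset.univ.filter (fun t => x t = j)).card) / 2 :=
          mul_le_mul_of_nonneg_left hsum (by positivity)
      _ = (1 / 2) * ((1 / (m:ℝ)) * ∑ j ∈ Finset.image x Finset.univ,
            Real.sqrt ((Finset.univ.filter (fun t => x t = j)).card)) := by
          rw [← Finset.sum_div]; ring
end
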